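/- arXiv:1507.00656 — 6 statements merged into one kernel-verified Lean document; each statement's English description precedes it below -/
import Mathlib

section
/- In the symmetric group S_n, the only possible braid moves applicable to reduced words in the commutation class of the reduced word w0 = (s_1 s_2 ... s_{n-1})(s_1 s_2 ... s_{n-2}) ... (s_1 s_2)(s_1) of the longest element are braid moves of the form s_1 s_2 s_1 = s_2 s_1 s_2. -/
/-- The reduced word `(s₁s₂⋯s_{n-1})(s₁s₂⋯s_{n-2})⋯(s₁s₂)(s₁)` for the longest
element of the symmetric group `Sₙ`, as a list of indices of simple transpositions. -/
def w0word (n : ℕ) : List ℕ :=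
  (((List.range (n - 1)).reverse).map (fun j => (List.range (j + 1)).map (· + 1))).flatten

/-- A single commutation move `sᵢsⱼ = sⱼsᵢ` for `|i-j| > 1` applied to a word. -/
def CommMove (w w' : List ℕ) : Prop :=
  ∃ (l r : List ℕ) (a b : ℕ), (a + 2 ≤ b ∨ b + 2 ≤ a) ∧
    w = l ++ a :: b :: r ∧ w' = l ++ b :: a :: r

/-- The commutation class of the reduced word `w0word n`: all words reachable from
it using only commutation moves. -/
def CommClass (n : ℕ) : Set (List ℕ) :=
  {w | Relation.ReflTransGen CommMove (w0word n) w}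

/-- Projection of a word onto the pair of letters `{b, b+1}`. -/
def proj (b : ℕ) (w : List ℕ) : List ℕ :=
  w.filter (fun x => x = b ∨ x = b + 1)

lemma proj_append (b : ℕ) (l r : List ℕ) : proj b (l ++ r) = proj b l ++ proj b r := by
  simp [proj]

lemma proj_eq_of_commMove {w w' : List ℕ} (h : CommMove w w') (b : ℕ) :
    proj b w = proj b w' := by
  obtain ⟨l, r, c, d, hcd, rfl, rfl⟩ := h
  simp only [proj, List.filter_append]
  congr 1
  simp only [List.filter_cons]
  by_cases hc : c = b ∨ c = b + 1 <;> by_cases hd : d = b ∨ d = b + 1 <;>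
    simp [hc, hd] <;> omega

lemma proj_eq_of_commClass {n : ℕ} {w : List ℕ} (hw : w ∈ CommClass n) (b : ℕ) :
    proj b (w0word n) = proj b w := by
  induction hw with
  | refl => rfl
  | tail _ hstep ih => exact ih.trans (proj_eq_of_commMove hstep b)

lemma proj_block (b m : ℕ) (hb : 1 ≤ b) :
    proj b ((List.range m).map (· + 1)) =
      if b + 1 ≤ m then [b, b + 1] else if b ≤ m then [b] else [] := by
  induction m with
  | zero =>
    rw [if_neg (by omega), if_neg (by omega)]
    rfl
  | succ m ih =>
    rw [List.range_succ, List.map_append, proj_append, ih]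
    simp only [List.map_cons, List.map_nil]
    by_cases h1 : b + 1 ≤ m
    · rw [if_pos h1, if_pos (by omega)]
      have : ¬(m + 1 = b ∨ m + 1 = b + 1) := by omega
      simp only [proj, List.filter_cons, List.filter_nil]
      simp only [this]
      simp
    · by_cases h2 : b ≤ m
      · rw [if_neg h1, if_pos h2]
        by_cases h3 : b + 1 ≤ m + 1
        · rw [if_pos h3]
          have hm : m = b := by omega
          subst hm
          simp [proj]
        · omega
      · rw [if_neg h1, if_neg h2]
        by_cases h3 : b + 1 ≤ m + 1
        · omega
        · rw [if_neg h3]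
          by_cases h4 : b ≤ m + 1
          · rw [if_pos h4]
            have hm : m + 1 = b := by omega
            simp [proj, hm]
          · rw [if_neg h4]
            have : ¬(m + 1 = b ∨ m + 1 = b + 1) := by omega
            simp only [proj, List.filter_cons, List.filter_nil]
            simp only [this]
            simp

lemma w0word_succ (n : ℕ) :
    w0word (n + 2) = ((List.range (n + 1)).map (· + 1)) ++ w0word (n + 1) := by
  simp [w0word, List.range_succ]

lemma proj_w0word (b n : ℕ) (hb : 1 ≤ b) :
    proj b (w0word n) =
      (List.replicate (n - 1 - b) [b, b + 1]).flatten ++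
        if b + 1 ≤ n then [b] else [] := by
  induction n with
  | zero =>
    rw [if_neg (by omega), show 0 - 1 - b = 0 by omega]
    rfl
  | succ n ih =>
    match n, ih with
    | 0, _ =>
      rw [if_neg (by omega), show 0 + 1 - 1 - b = 0 by omega]
      rfl
    | (m + 1), ih =>
      rw [w0word_succ, proj_append, proj_block b (m + 1) hb, ih]
      by_cases h1 : b + 1 ≤ m + 1
      · rw [if_pos h1, if_pos h1, if_pos (by omega)]
        have : m + 2 - 1 - b = (m + 1 - 1 - b) + 1 := by omega
        rw [this, List.replicate_succ]
        simp
      · by_cases h2 : b ≤ m + 1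
        · rw [if_neg h1, if_pos h2, if_neg h1, if_pos (by omega)]
          have e1 : m + 1 - 1 - b = 0 := by omega
          have e2 : m + 2 - 1 - b = 0 := by omega
          rw [e1, e2]
          simp
        · rw [if_neg h1, if_neg h2, if_neg h1, if_neg (by omega)]
          have e1 : m + 1 - 1 - b = 0 := by omega
          have e2 : m + 2 - 1 - b = 0 := by omega
          rw [e1, e2]
          simp

lemma chain_alt (b : ℕ) : ∀ k : ℕ, ∃ t : List ℕ,
    (List.replicate k [b, b + 1]).flatten ++ [b] = b :: t ∧
      List.Chain' (· ≠ ·) ((List.replicate k [b, b + 1]).flatten ++ [b]) := by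
  intro k
  induction k with
  | zero => exact ⟨[], rfl, List.isChain_singleton _⟩
  | succ k ih =>
    obtain ⟨t, ht, hc⟩ := ih
    rw [List.replicate_succ]
    refine ⟨(b + 1) :: ((List.replicate k [b, b + 1]).flatten ++ [b]), by simp, ?_⟩
    simp only [List.flatten_cons, List.cons_append, List.nil_append]
    rw [ht] at hc ⊢
    exact List.isChain_cons_cons.2 ⟨by omega, List.isChain_cons_cons.2 ⟨by omega, hc⟩⟩

lemma chain_proj_w0word (b n : ℕ) (hb : 1 ≤ b) :
    List.Chain' (· ≠ ·) (proj b (w0word n)) := by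
  rw [proj_w0word b n hb]
  by_cases h : b + 1 ≤ n
  · rw [if_pos h]
    exact (chain_alt b (n - 1 - b)).choose_spec.2
  · rw [if_neg h]
    have : n - 1 - b = 0 := by omega
    simp [this]
    exact List.isChain_nil

lemma w0word_pos (n : ℕ) : ∀ x ∈ w0word n, 1 ≤ x := by
  intro x hx
  simp only [w0word, List.mem_flatten, List.mem_map, List.mem_reverse,
    List.mem_range] at hx
  obtain ⟨l, ⟨j, _, rfl⟩, hx⟩ := hx
  simp only [List.mem_map] at hx
  obtain ⟨y, _, rfl⟩ := hx
  omega

/-- Key step: if `w` is in the commutation class and contains the contiguous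
factor `[x, y, x]` where `y` is killed by `proj b` but `x` survives (with `b ≥ 1`),
we get a contradiction with the alternating structure. -/
lemma no_factor {n : ℕ} {w : List ℕ} (hw : w ∈ CommClass n) {i x y b : ℕ}
    (hb : 1 ≤ b) (hx : x = b ∨ x = b + 1) (hy : ¬(y = b ∨ y = b + 1))
    (h : (w.drop i).take 3 = [x, y, x]) : False := by
  have hd : w.drop i = [x, y, x] ++ (w.drop i).drop 3 := by
    rw [← h]; exact (List.take_append_drop 3 _).symm
  have hw2 : w = w.take i ++ ([x, y, x] ++ (w.drop i).drop 3) := by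
    rw [← hd, List.take_append_drop]
  have hmid : proj b [x, y, x] = [x, x] := by
    simp [proj, hx, hy]
  have hinf : [x, x] <:+: proj b w := by
    refine ⟨proj b (w.take i), proj b ((w.drop i).drop 3), ?_⟩
    conv_rhs => rw [hw2]
    rw [proj_append, proj_append, hmid, List.append_assoc]
  rw [← proj_eq_of_commClass hw b] at hinf
  have := (chain_proj_w0word b n hb).infix hinf
  simp at this

/-- The only braid moves applicable to words in the commutation class of
`(s₁⋯s_{n-1})(s₁⋯s_{n-2})⋯(s₁s₂)(s₁)` are of the form `s₁s₂s₁ = s₂s₁s₂`: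
any braid factor `sᵢs_{i+1}sᵢ` or `s_{i+1}sᵢs_{i+1}` occurring in such a word
is in fact the factor `s₁s₂s₁`. -/
theorem braid_moves_only_s1s2s1 (n : ℕ) (w : List ℕ) (hw : w ∈ CommClass n)
    (i a : ℕ)
    (h : (w.drop i).take 3 = [a, a + 1, a] ∨ (w.drop i).take 3 = [a + 1, a, a + 1]) :
    (w.drop i).take 3 = [1, 2, 1] := by
  rcases h with h | h
  · -- factor [a, a+1, a]
    match a, h with
    | 0, h =>
      -- contains letter 0, impossible
      exfalso
      have h0 : (0 : ℕ) ∈ w := by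
        have : (0 : ℕ) ∈ (w.drop i).take 3 := by rw [h]; simp
        exact List.mem_of_mem_drop (List.mem_of_mem_take this)
      have h0p : (0 : ℕ) ∈ proj 0 w := by
        simp [proj, h0]
      rw [← proj_eq_of_commClass hw 0] at h0p
      have : (0 : ℕ) ∈ w0word n := List.mem_of_mem_filter h0p
      exact absurd (w0word_pos n 0 this) (by omega)
    | 1, h => exact h
    | (a + 2), h =>
      exact absurd h (fun h => no_factor hw (b := a + 1) (by omega)
        (Or.inr rfl) (by omega) h)
  · -- factor [a+1, a, a+1]
    exact absurd h (fun h => no_factor hw (b := a + 1) (by omega)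
      (Or.inl rfl) (by omega) h)
end

section
/- In a standard right-justified tableau, the 2x2 configuration in which the promotion sliding path L passes through the top-left and bottom-left cells of a 2x2 block while the inverse promotion sliding path R passes through the bottom-left and bottom-right cells is impossible. -/
open scoped Classical
noncomputable section

/-- A cell of a tableau diagram: (row, column). -/
abbrev Cell := ℕ × ℕ

/-- The right-justified diagram of a partition `lam`: row `i` occupies the
columns `lam₀ - lamᵢ, …, lam₀ - 1` (all rows aligned at the right). -/
def rjDiagram (lam : List ℕ) : Set Cell :=
  {p | p.1 < lam.length ∧ lam.headI - lam.getD p.1 0 ≤ p.2 ∧ p.2 < lam.headI}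

/-- `t` is a standard tableau of the diagram `D` with entries `1, …, N`:
a bijective filling, strictly increasing along rows and columns (and `0`
outside the diagram). -/
def IsStandard (D : Set Cell) (N : ℕ) (t : Cell → ℕ) : Prop :=
  Set.BijOn t D (Set.Icc 1 N) ∧
  (∀ r c : ℕ, (r, c) ∈ D → (r, c + 1) ∈ D → t (r, c) < t (r, c + 1)) ∧
  (∀ r c : ℕ, (r, c) ∈ D → (r + 1, c) ∈ D → t (r, c) < t (r + 1, c)) ∧
  (∀ p, p ∉ D → t p = 0)

/-- `k` is a braid hook of `t`: the consecutive entries `k-1, k, k+1` occupy cells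
with `k-1` immediately left of `k`, `k+1` immediately below `k`, and no cell of the
diagram immediately below the cell of `k-1`. -/
def BraidHook (D : Set Cell) (t : Cell → ℕ) (k : ℕ) : Prop :=
  ∃ r c : ℕ, (r, c) ∈ D ∧ (r, c + 1) ∈ D ∧ (r + 1, c + 1) ∈ D ∧ (r + 1, c) ∉ D ∧
    t (r, c) + 1 = k ∧ t (r, c + 1) = k ∧ t (r + 1, c + 1) = k + 1

/-- `lam` is a partition: weakly decreasing list of positive integers. -/
def IsPartition (lam : List ℕ) : Prop :=
  lam.Pairwise (· ≥ ·) ∧ ∀ x ∈ lam, 0 < x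

/-- One step of the promotion (jeu-de-taquin) sliding path: from cell `a` move to
the right or lower neighbor `b ∈ D`, whichever has the smaller entry. -/
def PromStep (D : Set Cell) (t : Cell → ℕ) (a b : Cell) : Prop :=
  b ∈ D ∧
  ((b = (a.1, a.2 + 1) ∧ ((a.1 + 1, a.2) ∉ D ∨ t b < t (a.1 + 1, a.2))) ∨
   (b = (a.1 + 1, a.2) ∧ ((a.1, a.2 + 1) ∉ D ∨ t b < t (a.1, a.2 + 1))))

/-- The promotion sliding path `L` of `t`: starts at the cell containing `1`,
follows promotion steps, and ends at a cell with no right or lower neighbor. -/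
def IsPromPath (D : Set Cell) (t : Cell → ℕ) (path : List Cell) : Prop :=
  path ≠ [] ∧ path.headI ∈ D ∧ t path.headI = 1 ∧
  List.Chain' (PromStep D t) path ∧
  (path.getLast!.1, path.getLast!.2 + 1) ∉ D ∧
  (path.getLast!.1 + 1, path.getLast!.2) ∉ D

/-- One step of the inverse promotion sliding path: from cell `a` move to the left
or upper neighbor `b ∈ D`, whichever has the larger entry. -/
def InvPromStep (D : Set Cell) (t : Cell → ℕ) (a b : Cell) : Prop :=
  b ∈ D ∧
  ((a = (b.1, b.2 + 1) ∧ (∀ r, r + 1 = a.1 → ((r, a.2) ∉ D ∨ t (r, a.2) < t b))) ∨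
   (a = (b.1 + 1, b.2) ∧ (∀ c, c + 1 = a.2 → ((a.1, c) ∉ D ∨ t (a.1, c) < t b))))

/-- The inverse promotion sliding path `R` of `t`: starts at the cell containing the
maximal entry `N`, follows inverse promotion steps, and ends at a cell with no left
or upper neighbor. -/
def IsInvPromPath (D : Set Cell) (t : Cell → ℕ) (N : ℕ) (path : List Cell) : Prop :=
  path ≠ [] ∧ path.headI ∈ D ∧ t path.headI = N ∧
  List.Chain' (InvPromStep D t) path ∧
  (∀ c, c + 1 = path.getLast!.2 → (path.getLast!.1, c) ∉ D) ∧
  (∀ r, r + 1 = path.getLast!.1 → (r, path.getLast!.2) ∉ D)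

/-- `a` and `b` are consecutive cells of `path` (in this order). -/
def AdjIn (path : List Cell) (a b : Cell) : Prop :=
  ∃ i, path[i]? = some a ∧ path[i + 1]? = some b


lemma chain'_of_adj {Rel : Cell → Cell → Prop} {l : List Cell} (h : List.Chain' Rel l)
    {a b : Cell} (hadj : AdjIn l a b) : Rel a b := by
  obtain ⟨i, ha, hb⟩ := hadj
  have hib : i + 1 < l.length := by
    by_contra hlt
    simp [List.getElem?_eq_none (le_of_not_gt hlt)] at hb
  have hia : i < l.length := Nat.lt_of_succ_lt hib
  rw [List.getElem?_eq_getElem hia] at ha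
  rw [List.getElem?_eq_getElem hib] at hb
  have := List.isChain_iff_getElem.mp h i (by omega)
  rw [Option.some_inj] at ha hb
  rwa [ha, hb] at this

/-- In a standard right-justified tableau, the `2×2` configuration in which the
promotion sliding path `L` passes through the top-left and bottom-left cells of a
fully contained `2×2` block while the inverse promotion sliding path `R` passes
through the bottom-right and bottom-left cells is impossible. -/
theorem forbidden_configuration (lam : List ℕ) (hpart : IsPartition lam)
    (t : Cell → ℕ) (ht : IsStandard (rjDiagram lam) lam.sum t)
    (L R : List Cell)
    (hL : IsPromPath (rjDiagram lam) t L)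
    (hR : IsInvPromPath (rjDiagram lam) t lam.sum R) :
    ¬ ∃ r c : ℕ, (r, c) ∈ rjDiagram lam ∧ (r, c + 1) ∈ rjDiagram lam ∧
        (r + 1, c) ∈ rjDiagram lam ∧ (r + 1, c + 1) ∈ rjDiagram lam ∧
        AdjIn L (r, c) (r + 1, c) ∧ AdjIn R (r + 1, c + 1) (r + 1, c) := by
  rintro ⟨r, c, hx, hb, ha, hy, hLadj, hRadj⟩
  have hstepL : PromStep (rjDiagram lam) t (r, c) (r + 1, c) :=
    chain'_of_adj hL.2.2.2.1 hLadj
  have hstepR : InvPromStep (rjDiagram lam) t (r + 1, c + 1) (r + 1, c) :=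
    chain'_of_adj hR.2.2.2.1 hRadj
  obtain ⟨-, hL1 | hL2⟩ := hstepL
  · exact absurd hL1.1 (by simp)
  obtain ⟨-, hR1 | hR2⟩ := hstepR
  · rcases hR1.2 r rfl with h | h
    · exact h hb
    · have h2 := hL2.2.resolve_left (fun hh => hh hb)
      dsimp only at h h2
      omega
  · exact absurd hR2.1 (by simp)
end
end

section
/- On standard Young tableaux (or linear extensions of a finite poset), the promotion operator expressed as the composition of Bender-Knuth-type involutions, partial promotion d_k = tau_k tau_{k+1} ... tau_{N-1}, and partial inverse promotion d*_k = tau_{k-1} tau_{k-2} ... tau_1 satisfy: d*_k d_k applied to a tableau t' with braid hook k equals d_k d*_k applied to t' (the two partial operators commute when k is a braid hook of t'). -/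
open scoped Classical
noncomputable section

/-- Swap the entries `i` and `i+1` in the filling `t`. -/
def swapVals (i : ℕ) (t : Cell → ℕ) : Cell → ℕ :=
  fun p => if t p = i then i + 1 else if t p = i + 1 then i else t p

/-- The Bender–Knuth type involution `τᵢ`: interchange `i` and `i+1` if the result
is again standard; otherwise do nothing. -/
def tauT (D : Set Cell) (N i : ℕ) (t : Cell → ℕ) : Cell → ℕ :=
  if IsStandard D N (swapVals i t) then swapVals i t else t

/-- Partial promotion `∂ₖ = τₖ τₖ₊₁ ⋯ τ_{N-1}` (as a right action: `τₖ` applied first). -/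
def dPart (D : Set Cell) (N k : ℕ) (t : Cell → ℕ) : Cell → ℕ :=
  (List.range' k (N - k)).foldl (fun s i => tauT D N i s) t

/-- Partial inverse promotion `∂*ₖ = τ_{k-1} τ_{k-2} ⋯ τ₁`. -/
def dStar (D : Set Cell) (N k : ℕ) (t : Cell → ℕ) : Cell → ℕ :=
  ((List.range' 1 (k - 1)).reverse).foldl (fun s i => tauT D N i s) t

/-- Promotion `∂ = τ₁ τ₂ ⋯ τ_{N-1}`. -/
def promT (D : Set Cell) (N : ℕ) : (Cell → ℕ) → Cell → ℕ := dPart D N 1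

/-- Inverse promotion `∂* = τ_{N-1} ⋯ τ₁`. -/
def invPromT (D : Set Cell) (N : ℕ) : (Cell → ℕ) → Cell → ℕ := dStar D N N

/-- Evacuation `ε = (τ₁⋯τ_{N-1})(τ₁⋯τ_{N-2})⋯(τ₁τ₂)(τ₁)` (right action: leftmost
block applied first). -/
def evacT (D : Set Cell) (N : ℕ) (t : Cell → ℕ) : Cell → ℕ :=
  (List.range (N - 1)).foldl
    (fun s j => (List.range' 1 (N - 1 - j)).foldl (fun u i => tauT D N i u) s) t

/-- Dual evacuation `ε* = (τ_{N-1}⋯τ₁)(τ_{N-1}⋯τ₂)⋯(τ_{N-1})`. -/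
def dualEvacT (D : Set Cell) (N : ℕ) (t : Cell → ℕ) : Cell → ℕ :=
  (List.range (N - 1)).foldl
    (fun s j => ((List.range' (j + 1) (N - 1 - j)).reverse).foldl (fun u i => tauT D N i u) s) t

/-- The odd promotion operator `τₒ = ∏_{i odd} τᵢ`. -/
def tauOddT (D : Set Cell) (N : ℕ) (t : Cell → ℕ) : Cell → ℕ :=
  ((List.range' 1 (N - 1)).filter (fun i => i % 2 = 1)).foldl (fun s i => tauT D N i s) t

/-- The even promotion operator `τₑ = ∏_{i even} τᵢ`. -/
def tauEvenT (D : Set Cell) (N : ℕ) (t : Cell → ℕ) : Cell → ℕ :=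
  ((List.range' 1 (N - 1)).filter (fun i => i % 2 = 0)).foldl (fun s i => tauT D N i s) t

/-! ### Auxiliary lemmas -/

/-- Swapping the values `i, i+1` at the positions of `i` and `i+1` is free:
`i+1` is neither immediately right of nor immediately below `i`. -/
def FreeSwap (t : Cell → ℕ) (i : ℕ) : Prop :=
  ∀ p q : Cell, t p = i → t q = i + 1 → q ≠ (p.1, p.2 + 1) ∧ q ≠ (p.1 + 1, p.2)

lemma swap_bijOn {i N : ℕ} (hi : 1 ≤ i) (hiN : i + 1 ≤ N) :
    Set.BijOn (Equiv.swap i (i + 1)) (Set.Icc 1 N) (Set.Icc 1 N) := by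
  have hmaps : Set.MapsTo (Equiv.swap i (i + 1)) (Set.Icc 1 N) (Set.Icc 1 N) := by
    intro x hx
    simp only [Set.mem_Icc] at *
    rw [Equiv.swap_apply_def]
    split_ifs <;> omega
  refine ⟨hmaps, (Equiv.injective _).injOn, ?_⟩
  intro y hy
  exact ⟨Equiv.swap i (i + 1) y, hmaps hy, by simp⟩

lemma isStandard_swap_iff {D : Set Cell} {N i : ℕ} {t : Cell → ℕ}
    (ht : IsStandard D N t) (hi : 1 ≤ i) (hiN : i + 1 ≤ N) :
    IsStandard D N (swapVals i t) ↔ FreeSwap t i := by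
  constructor
  · intro hs p q hp hq
    obtain ⟨pr, pc⟩ := p; obtain ⟨qr, qc⟩ := q
    have hpD : (pr, pc) ∈ D := by
      by_contra h; rw [ht.2.2.2 _ h] at hp; omega
    have hqD : (qr, qc) ∈ D := by
      by_contra h; rw [ht.2.2.2 _ h] at hq; omega
    constructor
    · intro h
      simp only [Prod.mk.injEq] at h
      obtain ⟨h1, h2⟩ := h
      rw [h1, h2] at hqD hq
      have hlt := hs.2.1 pr pc hpD hqD
      simp only [swapVals, hp, hq] at hlt
      split_ifs at hlt <;> omega
    · intro h
      simp only [Prod.mk.injEq] at h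
      obtain ⟨h1, h2⟩ := h
      rw [h1, h2] at hqD hq
      have hlt := hs.2.2.1 pr pc hpD hqD
      simp only [swapVals, hp, hq] at hlt
      split_ifs at hlt <;> omega
  · intro hf
    refine ⟨?_, ?_, ?_, ?_⟩
    · have he : swapVals i t = (Equiv.swap i (i + 1)) ∘ t := by
        funext p; simp [swapVals, Equiv.swap_apply_def]
      rw [he]
      exact (swap_bijOn hi hiN).comp ht.1
    · intro r c h1 h2
      have hlt := ht.2.1 r c h1 h2
      have hna : ¬(t (r, c) = i ∧ t (r, c + 1) = i + 1) := fun h =>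
        (hf _ _ h.1 h.2).1 rfl
      simp only [swapVals]
      split_ifs <;> omega
    · intro r c h1 h2
      have hlt := ht.2.2.1 r c h1 h2
      have hna : ¬(t (r, c) = i ∧ t (r + 1, c) = i + 1) := fun h =>
        (hf _ _ h.1 h.2).2 rfl
      simp only [swapVals]
      split_ifs <;> omega
    · intro p hp
      have h0 := ht.2.2.2 p hp
      simp only [swapVals, h0]
      split_ifs <;> first | exact ‹False›.elim | omega

lemma freeSwap_swap {i j : ℕ} {t : Cell → ℕ} (h1 : j ≠ i) (h2 : j ≠ i + 1)
    (h3 : j + 1 ≠ i) (h4 : j + 1 ≠ i + 1) :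
    FreeSwap (swapVals i t) j ↔ FreeSwap t j := by
  have hval : ∀ (p : Cell) (v : ℕ), v = j ∨ v = j + 1 →
      (swapVals i t p = v ↔ t p = v) := by
    intro p v hv
    simp only [swapVals]
    split_ifs <;> omega
  constructor
  · intro h p q hp hq
    exact h p q ((hval p j (Or.inl rfl)).mpr hp) ((hval q (j + 1) (Or.inr rfl)).mpr hq)
  · intro h p q hp hq
    exact h p q ((hval p j (Or.inl rfl)).mp hp) ((hval q (j + 1) (Or.inr rfl)).mp hq)

lemma tauT_standard {D : Set Cell} {N i : ℕ} {t : Cell → ℕ} (ht : IsStandard D N t) :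
    IsStandard D N (tauT D N i t) := by
  unfold tauT; split_ifs with h
  exacts [h, ht]

lemma swapVals_comm {i j : ℕ} (t : Cell → ℕ) (hij : i + 2 ≤ j) :
    swapVals i (swapVals j t) = swapVals j (swapVals i t) := by
  funext p
  simp only [swapVals]
  split_ifs <;> omega

lemma tauT_comm {D : Set Cell} {N i j : ℕ} {t : Cell → ℕ} (ht : IsStandard D N t)
    (hi : 1 ≤ i) (hij : i + 2 ≤ j) (hjN : j + 1 ≤ N) :
    tauT D N i (tauT D N j t) = tauT D N j (tauT D N i t) := by
  have hiN : i + 1 ≤ N := by omega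
  have hj1 : 1 ≤ j := by omega
  have hswap := swapVals_comm t hij
  by_cases hB : IsStandard D N (swapVals j t)
  · have e1 : IsStandard D N (swapVals i (swapVals j t)) ↔ IsStandard D N (swapVals i t) := by
      rw [isStandard_swap_iff hB hi hiN, isStandard_swap_iff ht hi hiN,
        freeSwap_swap (by omega) (by omega) (by omega) (by omega)]
    by_cases hA : IsStandard D N (swapVals i t)
    · have hA2 := e1.mpr hA
      have hB2 : IsStandard D N (swapVals j (swapVals i t)) := by
        rw [isStandard_swap_iff hA hj1 hjN,
          freeSwap_swap (by omega) (by omega) (by omega) (by omega),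
          ← isStandard_swap_iff ht hj1 hjN]
        exact hB
      have tj : tauT D N j t = swapVals j t := if_pos hB
      have ti : tauT D N i t = swapVals i t := if_pos hA
      rw [tj, ti]
      rw [show tauT D N i (swapVals j t) = swapVals i (swapVals j t) from if_pos hA2]
      rw [show tauT D N j (swapVals i t) = swapVals j (swapVals i t) from if_pos hB2]
      exact hswap
    · have hA2 : ¬ IsStandard D N (swapVals i (swapVals j t)) := fun h => hA (e1.mp h)
      have tj : tauT D N j t = swapVals j t := if_pos hB
      have ti : tauT D N i t = t := if_neg hA
      rw [tj, ti, tj]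
      exact if_neg hA2
  · by_cases hA : IsStandard D N (swapVals i t)
    · have hB2 : ¬ IsStandard D N (swapVals j (swapVals i t)) := by
        rw [isStandard_swap_iff hA hj1 hjN,
          freeSwap_swap (by omega) (by omega) (by omega) (by omega),
          ← isStandard_swap_iff ht hj1 hjN]
        exact hB
      have tj : tauT D N j t = t := if_neg hB
      have ti : tauT D N i t = swapVals i t := if_pos hA
      rw [tj, ti]
      exact (if_neg hB2).symm
    · have tj : tauT D N j t = t := if_neg hB
      have ti : tauT D N i t = t := if_neg hA
      rw [tj, ti, tj]

lemma tauT_fix_row {D : Set Cell} {N i r c : ℕ} {t : Cell → ℕ}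
    (hd1 : (r, c) ∈ D) (hd2 : (r, c + 1) ∈ D)
    (h1 : t (r, c) = i) (h2 : t (r, c + 1) = i + 1) :
    tauT D N i t = t := by
  refine if_neg fun hs => ?_
  have hlt := hs.2.1 r c hd1 hd2
  simp only [swapVals, h1, h2] at hlt
  split_ifs at hlt <;> omega

lemma tauT_fix_col {D : Set Cell} {N i r c : ℕ} {t : Cell → ℕ}
    (hd1 : (r, c) ∈ D) (hd2 : (r + 1, c) ∈ D)
    (h1 : t (r, c) = i) (h2 : t (r + 1, c) = i + 1) :
    tauT D N i t = t := by
  refine if_neg fun hs => ?_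
  have hlt := hs.2.2.1 r c hd1 hd2
  simp only [swapVals, h1, h2] at hlt
  split_ifs at hlt <;> omega

lemma foldl_tau_standard {D : Set Cell} {N : ℕ} (l : List ℕ) {t : Cell → ℕ}
    (ht : IsStandard D N t) :
    IsStandard D N (l.foldl (fun s i => tauT D N i s) t) := by
  induction l generalizing t with
  | nil => exact ht
  | cons a l ih => exact ih (tauT_standard ht)

lemma foldl_tau_fix {D : Set Cell} {N : ℕ} (l : List ℕ) {t : Cell → ℕ} {p : Cell} {v : ℕ}
    (hv : ∀ i ∈ l, v ≠ i ∧ v ≠ i + 1) (hp : t p = v) :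
    l.foldl (fun s i => tauT D N i s) t p = v := by
  induction l generalizing t with
  | nil => exact hp
  | cons a l ih =>
    refine ih (fun i hi => hv i (List.mem_cons_of_mem _ hi)) ?_
    have ha := hv a List.mem_cons_self
    show tauT D N a t p = v
    by_cases h : IsStandard D N (swapVals a t)
    · rw [show tauT D N a t = swapVals a t from if_pos h]
      simp only [swapVals, hp]
      split_ifs <;> omega
    · rw [show tauT D N a t = t from if_neg h]
      exact hp

lemma foldl_tau_comm_single {D : Set Cell} {N i : ℕ} (l : List ℕ) {t : Cell → ℕ}
    (ht : IsStandard D N t) (hi : 1 ≤ i) (hiN : i + 1 ≤ N)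
    (hl : ∀ j ∈ l, i + 2 ≤ j ∧ j + 1 ≤ N) :
    l.foldl (fun s n => tauT D N n s) (tauT D N i t) =
      tauT D N i (l.foldl (fun s n => tauT D N n s) t) := by
  induction l generalizing t with
  | nil => rfl
  | cons j l ih =>
    have hj := hl j List.mem_cons_self
    simp only [List.foldl_cons]
    rw [← tauT_comm ht hi hj.1 hj.2,
      ih (tauT_standard ht) (fun j hj' => hl j (List.mem_cons_of_mem _ hj'))]

lemma foldl_tau_comm {D : Set Cell} {N : ℕ} (l1 l2 : List ℕ) {t : Cell → ℕ}
    (ht : IsStandard D N t)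
    (h1 : ∀ i ∈ l1, 1 ≤ i ∧ i + 1 ≤ N)
    (h12 : ∀ i ∈ l1, ∀ j ∈ l2, i + 2 ≤ j ∧ j + 1 ≤ N) :
    l2.foldl (fun s n => tauT D N n s) (l1.foldl (fun s n => tauT D N n s) t) =
      l1.foldl (fun s n => tauT D N n s) (l2.foldl (fun s n => tauT D N n s) t) := by
  induction l1 generalizing t with
  | nil => rfl
  | cons i l1 ih =>
    have hi := h1 i List.mem_cons_self
    simp only [List.foldl_cons]
    rw [ih (tauT_standard ht) (fun i hi' => h1 i (List.mem_cons_of_mem _ hi'))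
        (fun i hi' => h12 i (List.mem_cons_of_mem _ hi')),
      foldl_tau_comm_single l2 ht hi.1 hi.2 (h12 i List.mem_cons_self)]

/-- If `k` is a braid hook of the standard tableau `t'`, then the partial promotion
`∂ₖ = τₖτₖ₊₁⋯τ_{N-1}` and the partial inverse promotion `∂*ₖ = τ_{k-1}⋯τ₁`
commute on `t'`: `t'.∂*ₖ∂ₖ = t'.∂ₖ∂*ₖ`. -/
theorem partial_promotions_commute_at_braid_hook (D : Set Cell) (N k : ℕ)
    (t' : Cell → ℕ) (ht : IsStandard D N t') (hk : BraidHook D t' k) :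
    dPart D N k (dStar D N k t') = dStar D N k (dPart D N k t') := by
  obtain ⟨r, c, hD1, hD2, hD3, hD4, hv1, hv2, hv3⟩ := hk
  have hk2 : 2 ≤ k := by
    have h := ht.1.1 hD1
    simp only [Set.mem_Icc] at h
    omega
  have hkN : k + 1 ≤ N := by
    have h := ht.1.1 hD3
    simp only [Set.mem_Icc] at h
    omega
  set L1 : List ℕ := (List.range' 1 (k - 2)).reverse with hL1
  set L2 : List ℕ := List.range' (k + 1) (N - (k + 1)) with hL2
  have e1 : (List.range' 1 (k - 1)).reverse = (k - 1) :: L1 := by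
    have h : k - 1 = (k - 2) + 1 := by omega
    rw [h, List.range'_concat, List.reverse_append]
    simp only [List.reverse_cons, List.reverse_nil, List.nil_append, List.cons_append,
      List.singleton_append]
    congr 1
    omega
  have e2 : List.range' k (N - k) = k :: L2 := by
    have h : N - k = (N - (k + 1)) + 1 := by omega
    rw [h, List.range'_succ]
  have hmem1 : ∀ i ∈ L1, 1 ≤ i ∧ i ≤ k - 2 := by
    intro i hi
    rw [hL1, List.mem_reverse, List.mem_range'_1] at hi
    omega
  have hmem2 : ∀ j ∈ L2, k + 1 ≤ j ∧ j ≤ N - 1 := by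
    intro j hj
    rw [hL2, List.mem_range'_1] at hj
    omega
  have hstar : dStar D N k t' = L1.foldl (fun s i => tauT D N i s) t' := by
    rw [dStar, e1, List.foldl_cons,
      tauT_fix_row hD1 hD2 (by omega) (by omega)]
  have hpart : dPart D N k t' = L2.foldl (fun s i => tauT D N i s) t' := by
    rw [dPart, e2, List.foldl_cons, tauT_fix_col hD2 hD3 hv2 hv3]
  have hLHS : dPart D N k (dStar D N k t') =
      L2.foldl (fun s i => tauT D N i s) (L1.foldl (fun s i => tauT D N i s) t') := by
    rw [hstar, dPart, e2, List.foldl_cons]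
    have hA1 : (L1.foldl (fun s i => tauT D N i s) t') (r, c + 1) = k :=
      foldl_tau_fix L1 (fun i hi => by have := hmem1 i hi; omega) hv2
    have hA2 : (L1.foldl (fun s i => tauT D N i s) t') (r + 1, c + 1) = k + 1 :=
      foldl_tau_fix L1 (fun i hi => by have := hmem1 i hi; omega) hv3
    rw [tauT_fix_col hD2 hD3 hA1 hA2]
  have hRHS : dStar D N k (dPart D N k t') =
      L1.foldl (fun s i => tauT D N i s) (L2.foldl (fun s i => tauT D N i s) t') := by
    rw [hpart, dStar, e1, List.foldl_cons]
    have hB1 : (L2.foldl (fun s i => tauT D N i s) t') (r, c) = k - 1 :=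
      foldl_tau_fix L2 (fun j hj => by have := hmem2 j hj; omega) (by omega)
    have hB2 : (L2.foldl (fun s i => tauT D N i s) t') (r, c + 1) = (k - 1) + 1 :=
      foldl_tau_fix L2 (fun j hj => by have := hmem2 j hj; omega) (by omega)
    rw [tauT_fix_row hD1 hD2 hB1 hB2]
  rw [hLHS, hRHS]
  exact foldl_tau_comm L1 L2 ht
    (fun i hi => by have := hmem1 i hi; omega)
    (fun i hi j hj => by have := hmem1 i hi; have := hmem2 j hj; omega)
end
end

section
/- Evacuation e and dual evacuation e* on standard tableaux are involutions, and promotion d and inverse promotion d* satisfy d* = d^{-1}, e d = d* e, and e* d = d* e*. -/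
open scoped Classical
noncomputable section

namespace EvacProof

/-- The value-swapping function on ℕ. -/
def sf (i x : ℕ) : ℕ := if x = i then i + 1 else if x = i + 1 then i else x

lemma swapVals_eq (i : ℕ) (t : Cell → ℕ) : swapVals i t = fun p => sf i (t p) := rfl

lemma sf_sf (i x : ℕ) : sf i (sf i x) = x := by unfold sf; split_ifs <;> omega

lemma sf_inj {i x y : ℕ} (h : sf i x = sf i y) : x = y := by
  unfold sf at h; split_ifs at h <;> omega

lemma sf_eq_iff {i j x : ℕ} (h1 : j ≠ i) (h2 : j ≠ i + 1) : sf i x = j ↔ x = j := by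
  unfold sf; split_ifs <;> omega

lemma sf_lt {i a b : ℕ} (hab : a < b) (h : a ≠ i ∨ b ≠ i + 1) : sf i a < sf i b := by
  unfold sf; rcases h with h | h <;> split_ifs <;> omega

lemma swap_swap (i : ℕ) (t : Cell → ℕ) : swapVals i (swapVals i t) = t := by
  funext p; simp [swapVals_eq, sf_sf]

lemma swap_comm {i j : ℕ} (h : i + 2 ≤ j) (t : Cell → ℕ) :
    swapVals i (swapVals j t) = swapVals j (swapVals i t) := by
  funext p; simp only [swapVals_eq, sf]; split_ifs <;> omega

/-- Adjacency of the values i, i+1 in t. -/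
def Adj (D : Set Cell) (t : Cell → ℕ) (i : ℕ) : Prop :=
  ∃ r c : ℕ, ((r, c) ∈ D ∧ (r, c + 1) ∈ D ∧ t (r, c) = i ∧ t (r, c + 1) = i + 1) ∨
    ((r, c) ∈ D ∧ (r + 1, c) ∈ D ∧ t (r, c) = i ∧ t (r + 1, c) = i + 1)

variable {D : Set Cell} {N : ℕ} {t : Cell → ℕ}

lemma std_swap_iff (ht : IsStandard D N t) {i : ℕ} (hi : 1 ≤ i) (hiN : i < N) :
    IsStandard D N (swapVals i t) ↔ ¬ Adj D t i := by
  constructor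
  · rintro hs ⟨r, c, ⟨h1, h2, h3, h4⟩ | ⟨h1, h2, h3, h4⟩⟩
    · have := hs.2.1 r c h1 h2
      simp only [swapVals_eq, sf, h3, h4] at this
      split_ifs at this <;> omega
    · have := hs.2.2.1 r c h1 h2
      simp only [swapVals_eq, sf, h3, h4] at this
      split_ifs at this <;> omega
  · intro hadj
    obtain ⟨⟨hmap, hinj, hsurj⟩, hrow, hcol, hzero⟩ := ht
    refine ⟨⟨?_, ?_, ?_⟩, ?_, ?_, ?_⟩
    · intro p hp
      have h := hmap hp
      simp only [Set.mem_Icc] at h ⊢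
      simp only [swapVals_eq, sf]; split_ifs <;> omega
    · intro p hp q hq h
      exact hinj hp hq (sf_inj h)
    · intro v hv
      have hv' : sf i v ∈ Set.Icc 1 N := by
        simp only [Set.mem_Icc] at hv ⊢; unfold sf; split_ifs <;> omega
      obtain ⟨p, hp, hpt⟩ := hsurj hv'
      exact ⟨p, hp, by simp [swapVals_eq, hpt, sf_sf]⟩
    · intro r c h1 h2
      have hlt := hrow r c h1 h2
      have hne : t (r, c) ≠ i ∨ t (r, c + 1) ≠ i + 1 := by
        by_contra h
        push_neg at h
        exact hadj ⟨r, c, Or.inl ⟨h1, h2, h.1, h.2⟩⟩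
      exact sf_lt hlt hne
    · intro r c h1 h2
      have hlt := hcol r c h1 h2
      have hne : t (r, c) ≠ i ∨ t (r + 1, c) ≠ i + 1 := by
        by_contra h
        push_neg at h
        exact hadj ⟨r, c, Or.inr ⟨h1, h2, h.1, h.2⟩⟩
      exact sf_lt hlt hne
    · intro p hp
      have h0 := hzero p hp
      simp only [swapVals_eq, sf, h0]
      rw [if_neg (by omega), if_neg (by omega)]

lemma D_finite (ht : IsStandard D N t) : D.Finite :=
  Set.Finite.of_finite_image (ht.1.image_eq ▸ Set.finite_Icc 1 N) ht.1.injOn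

lemma not_std_swap_zero (ht : IsStandard D N t) : ¬ IsStandard D N (swapVals 0 t) := by
  intro hs
  have hfin : D.Finite := D_finite ht
  obtain ⟨p, hp⟩ : ∃ p : Cell, p ∉ D := by
    by_contra h
    push_neg at h
    have : (Set.univ : Set Cell).Finite := by
      convert hfin using 1
      exact (Set.eq_univ_iff_forall.2 h).symm
    exact Set.infinite_univ this
  have h0 := ht.2.2.2 p hp
  have h1 := hs.2.2.2 p hp
  simp [swapVals_eq, sf, h0] at h1

lemma not_std_swap_top (ht : IsStandard D N t) (hN : 1 ≤ N) :
    ¬ IsStandard D N (swapVals N t) := by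
  intro hs
  have : N ∈ Set.Icc 1 N := by simp [hN]
  obtain ⟨p, hp, hpt⟩ := ht.1.surjOn this
  have := hs.1.mapsTo hp
  simp [swapVals_eq, sf, hpt, Set.mem_Icc] at this

lemma swap_big (ht : IsStandard D N t) {i : ℕ} (hi : N < i) : swapVals i t = t := by
  funext p
  simp only [swapVals_eq, sf]
  by_cases hp : p ∈ D
  · have := ht.1.mapsTo hp
    simp only [Set.mem_Icc] at this
    split_ifs <;> omega
  · have := ht.2.2.2 p hp
    split_ifs <;> omega

/-- applying swapVals i does not change positions of values j, j+1 when far. -/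
lemma adj_swap_invariant {i j : ℕ} (h : i + 2 ≤ j ∨ j + 2 ≤ i) :
    Adj D (swapVals i t) j ↔ Adj D t j := by
  have e : ∀ p, swapVals i t p = j ↔ t p = j := fun p =>
    sf_eq_iff (by omega) (by omega)
  have e' : ∀ p, swapVals i t p = j + 1 ↔ t p = j + 1 := fun p =>
    sf_eq_iff (by omega) (by omega)
  unfold Adj
  constructor <;>
    rintro ⟨r, c, ⟨h1, h2, h3, h4⟩ | ⟨h1, h2, h3, h4⟩⟩
  · exact ⟨r, c, Or.inl ⟨h1, h2, (e _).1 h3, (e' _).1 h4⟩⟩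
  · exact ⟨r, c, Or.inr ⟨h1, h2, (e _).1 h3, (e' _).1 h4⟩⟩
  · exact ⟨r, c, Or.inl ⟨h1, h2, (e _).2 h3, (e' _).2 h4⟩⟩
  · exact ⟨r, c, Or.inr ⟨h1, h2, (e _).2 h3, (e' _).2 h4⟩⟩

lemma std_swap_swap_iff (ht : IsStandard D N t) {i j : ℕ}
    (hs : IsStandard D N (swapVals i t)) (h : i + 2 ≤ j ∨ j + 2 ≤ i) :
    IsStandard D N (swapVals j (swapVals i t)) ↔ IsStandard D N (swapVals j t) := by
  rcases Nat.lt_or_ge j 1 with hj | hj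
  · interval_cases j
    simp only [iff_iff_implies_and_implies]
    exact ⟨fun hc => absurd hc (not_std_swap_zero hs),
      fun hc => absurd hc (not_std_swap_zero ht)⟩
  rcases Nat.lt_or_ge j N with hjN | hjN
  · rw [std_swap_iff hs hj hjN, std_swap_iff ht hj hjN, adj_swap_invariant h]
  rcases Nat.eq_or_lt_of_le hjN with hjN | hjN
  · subst hjN
    simp only [iff_iff_implies_and_implies]
    exact ⟨fun hc => absurd hc (not_std_swap_top hs (by omega)),
      fun hc => absurd hc (not_std_swap_top ht (by omega))⟩
  · rw [swap_big hs hjN, swap_big ht hjN]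
    exact ⟨fun _ => ht, fun _ => hs⟩

lemma tau_std (ht : IsStandard D N t) (i : ℕ) : IsStandard D N (tauT D N i t) := by
  unfold tauT; split_ifs with h <;> assumption

lemma tau_tau (ht : IsStandard D N t) (i : ℕ) : tauT D N i (tauT D N i t) = t := by
  by_cases h : IsStandard D N (swapVals i t)
  · have h2 : IsStandard D N (swapVals i (swapVals i t)) := by
      rw [swap_swap]; exact ht
    simp only [tauT, if_pos h, if_pos h2, swap_swap]
    rw [if_pos ht]
  · simp only [tauT, if_neg h]

lemma tau_comm (ht : IsStandard D N t) {i j : ℕ} (hij : i + 2 ≤ j) :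
    tauT D N i (tauT D N j t) = tauT D N j (tauT D N i t) := by
  by_cases hA : IsStandard D N (swapVals i t) <;>
  by_cases hB : IsStandard D N (swapVals j t)
  · have c1 : IsStandard D N (swapVals i (swapVals j t)) :=
      (std_swap_swap_iff ht hB (Or.inr hij)).2 hA
    have c2 : IsStandard D N (swapVals j (swapVals i t)) :=
      (std_swap_swap_iff ht hA (Or.inl hij)).2 hB
    simp only [tauT, if_pos hA, if_pos hB, if_pos c1, if_pos c2]
    exact swap_comm hij t
  · have c2 : ¬ IsStandard D N (swapVals j (swapVals i t)) := by
      rw [std_swap_swap_iff ht hA (Or.inl hij)]; exact hB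
    simp only [tauT, if_pos hA, if_neg hB, if_neg c2]
  · have c1 : ¬ IsStandard D N (swapVals i (swapVals j t)) := by
      rw [std_swap_swap_iff ht hB (Or.inr hij)]; exact hA
    simp only [tauT, if_neg hA, if_pos hB, if_neg c1]
  · simp only [tauT, if_neg hA, if_neg hB]

end EvacProof
namespace EvacProof

variable {D : Set Cell} {N : ℕ} {t : Cell → ℕ}

/-- Apply a word of τ's, leftmost first. -/
def app (D : Set Cell) (N : ℕ) (w : List ℕ) (t : Cell → ℕ) : Cell → ℕ :=
  w.foldl (fun s i => tauT D N i s) t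

@[simp] lemma app_nil : app D N [] t = t := rfl

lemma app_cons (a : ℕ) (w : List ℕ) : app D N (a :: w) t = app D N w (tauT D N a t) := rfl

lemma app_append (u v : List ℕ) : app D N (u ++ v) t = app D N v (app D N u t) :=
  List.foldl_append ..

lemma app_singleton (a : ℕ) : app D N [a] t = tauT D N a t := rfl

lemma app_std (ht : IsStandard D N t) (w : List ℕ) : IsStandard D N (app D N w t) := by
  induction w generalizing t with
  | nil => exact ht
  | cons a w ih => exact ih (tau_std ht a)

lemma app_cancel (ht : IsStandard D N t) (w : List ℕ) :
    app D N w.reverse (app D N w t) = t := by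
  induction w generalizing t with
  | nil => rfl
  | cons a w ih =>
    rw [app_cons, List.reverse_cons, app_append, ih (tau_std ht a), app_singleton,
      tau_tau ht]

lemma app_cancel' (ht : IsStandard D N t) (w : List ℕ) :
    app D N w (app D N w.reverse t) = t := by
  have := app_cancel ht w.reverse
  rwa [List.reverse_reverse] at this

lemma tau_app_comm (ht : IsStandard D N t) {a : ℕ} {w : List ℕ}
    (h : ∀ b ∈ w, b + 2 ≤ a ∨ a + 2 ≤ b) :
    app D N w (tauT D N a t) = tauT D N a (app D N w t) := by
  induction w generalizing t with
  | nil => rfl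
  | cons b w ih =>
    have hb := h b (List.mem_cons_self)
    have hswap : tauT D N b (tauT D N a t) = tauT D N a (tauT D N b t) := by
      rcases hb with hb | hb
      · exact tau_comm ht hb
      · exact (tau_comm ht hb).symm
    rw [app_cons, hswap, ih (tau_std ht b) (fun c hc => h c (List.mem_cons_of_mem _ hc)),
      app_cons]

/-- The staircase word read by rows: (1..n)(1..n-1)…(1). -/
def Fw : ℕ → List ℕ
  | 0 => []
  | n + 1 => List.range' 1 (n + 1) ++ Fw n

/-- The staircase word read by antidiagonals: (1)(2,1)…(n,…,1). -/
def Vw : ℕ → List ℕ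
  | 0 => []
  | n + 1 => Vw n ++ (List.range' 1 (n + 1)).reverse

lemma mem_Fw {b n : ℕ} (h : b ∈ Fw n) : 1 ≤ b ∧ b ≤ n := by
  induction n with
  | zero => simp [Fw] at h
  | succ n ih =>
    rcases List.mem_append.1 h with h | h
    · rw [List.mem_range'_1] at h; omega
    · have := ih h; omega

lemma mem_Vw {b n : ℕ} (h : b ∈ Vw n) : 1 ≤ b ∧ b ≤ n := by
  induction n with
  | zero => simp [Vw] at h
  | succ n ih =>
    rcases List.mem_append.1 h with h | h
    · have := ih h; omega
    · rw [List.mem_reverse, List.mem_range'_1] at h; omega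

lemma range'_concat1 (s n : ℕ) : List.range' s (n+1) = List.range' s n ++ [s+n] := by
  simpa using List.range'_concat (step := 1) (s := s) (n := n)

lemma claimC (m : ℕ) : ∀ t : Cell → ℕ, IsStandard D N t →
    app D N (Vw m) (app D N (List.range' 1 (m + 1)) t) =
      app D N ((List.range' 1 (m + 1)).reverse) (app D N (Vw m) t) := by
  induction m with
  | zero => intro t ht; rfl
  | succ m ih =>
    intro t ht
    have hr : List.range' 1 (m + 2) = List.range' 1 (m + 1) ++ [m + 2] := by
      have := range'_concat1 1 (m + 1)
      rwa [show 1 + (m + 1) = m + 2 by omega] at this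
    have hVb : ∀ b ∈ Vw m, b + 2 ≤ m + 2 ∨ m + 2 + 2 ≤ b :=
      fun b hb => Or.inl (by have := mem_Vw hb; omega)
    calc app D N (Vw (m + 1)) (app D N (List.range' 1 (m + 2)) t)
        = app D N ((List.range' 1 (m+1)).reverse) (app D N (Vw m)
            (tauT D N (m+2) (app D N (List.range' 1 (m+1)) t))) := by
          rw [hr, app_append, show Vw (m+1) = Vw m ++ (List.range' 1 (m+1)).reverse from rfl,
            app_append, app_singleton]
      _ = app D N ((List.range' 1 (m+1)).reverse) (tauT D N (m+2) (app D N (Vw m)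
            (app D N (List.range' 1 (m+1)) t))) := by
          rw [tau_app_comm (app_std ht _) hVb]
      _ = app D N ((List.range' 1 (m+1)).reverse) (tauT D N (m+2)
            (app D N ((List.range' 1 (m+1)).reverse) (app D N (Vw m) t))) := by
          rw [ih t ht]
      _ = app D N ((List.range' 1 (m + 2)).reverse) (app D N (Vw (m + 1)) t) := by
          rw [hr, List.reverse_append, List.reverse_singleton,
            show Vw (m+1) = Vw m ++ (List.range' 1 (m+1)).reverse from rfl]
          rw [app_append (D := D) (N := N) [m+2] ((List.range' 1 (m+1)).reverse),
            app_singleton, app_append]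

lemma FV (m : ℕ) : ∀ t : Cell → ℕ, IsStandard D N t →
    app D N (Fw m) t = app D N (Vw m) t := by
  induction m with
  | zero => intro t _; rfl
  | succ m ih =>
    intro t ht
    rw [show Fw (m+1) = List.range' 1 (m+1) ++ Fw m from rfl, app_append,
      ih _ (app_std ht _), claimC m t ht,
      show Vw (m+1) = Vw m ++ (List.range' 1 (m+1)).reverse from rfl, app_append]

lemma revFw (m : ℕ) : (Fw m).reverse = Vw m := by
  induction m with
  | zero => rfl
  | succ m ih =>
    rw [show Fw (m+1) = List.range' 1 (m+1) ++ Fw m from rfl, List.reverse_append, ih]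
    rfl

lemma evac_sq_word (ht : IsStandard D N t) (m : ℕ) :
    app D N (Fw m) (app D N (Fw m) t) = t := by
  rw [FV m _ (app_std ht _), ← revFw, app_cancel ht]

lemma claimG2 (ht : IsStandard D N t) (m : ℕ) :
    app D N (List.range' 1 (m + 1)) (app D N (Vw (m + 1)) t) =
      app D N (Vw (m + 1)) (app D N ((List.range' 1 (m + 1)).reverse) t) := by
  have hV : Vw (m+1) = Vw m ++ (List.range' 1 (m+1)).reverse := rfl
  have h1 : app D N (List.range' 1 (m + 1)) (app D N (Vw (m + 1)) t) = app D N (Vw m) t := by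
    rw [hV, app_append, app_cancel' (app_std ht _)]
  have h2 := claimC (D := D) (N := N) m (app D N ((List.range' 1 (m + 1)).reverse) t)
    (app_std ht _)
  rw [app_cancel' ht] at h2
  rw [h1, hV, app_append, h2]

lemma rel5_word (ht : IsStandard D N t) (m : ℕ) :
    app D N (List.range' 1 (m + 1)) (app D N (Fw (m + 1)) t) =
      app D N (Fw (m + 1)) (app D N ((List.range' 1 (m + 1)).reverse) t) := by
  rw [FV (m+1) t ht, claimG2 ht m, FV (m+1) _ (app_std ht _)]

end EvacProof
namespace EvacProof

variable {D : Set Cell} {N : ℕ} {t : Cell → ℕ}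

lemma promT_eq : promT D N t = app D N (List.range' 1 (N - 1)) t := rfl

lemma invPromT_eq : invPromT D N t = app D N ((List.range' 1 (N - 1)).reverse) t := rfl

lemma evacT_eq_aux (n : ℕ) : ∀ t : Cell → ℕ,
    (List.range n).foldl (fun s j => (List.range' 1 (n - j)).foldl
      (fun u i => tauT D N i u) s) t = app D N (Fw n) t := by
  induction n with
  | zero => intro t; rfl
  | succ n ih =>
    intro t
    rw [List.range_succ_eq_map, List.foldl_cons, List.foldl_map]
    simp only [Nat.succ_sub_succ_eq_sub, Nat.sub_zero]
    rw [ih]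
    rw [show Fw (n+1) = List.range' 1 (n+1) ++ Fw n from rfl, app_append]
    rfl

lemma evacT_eq : evacT D N t = app D N (Fw (N - 1)) t := evacT_eq_aux (N - 1) t

/-- The dual staircase word: blocks (n,…,1)(n,…,2)…(n). -/
def Gw : ℕ → List ℕ
  | 0 => []
  | n + 1 => (List.range' 1 (n + 1)).reverse ++ (Gw n).map (· + 1)

lemma mem_Gw {b n : ℕ} (h : b ∈ Gw n) : 1 ≤ b ∧ b ≤ n := by
  induction n generalizing b with
  | zero => simp [Gw] at h
  | succ n ih =>
    rcases List.mem_append.1 h with h | h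
    · rw [List.mem_reverse, List.mem_range'_1] at h; omega
    · obtain ⟨c, hc, rfl⟩ := List.mem_map.1 h
      have := ih hc; omega

lemma range'_shift (s n : ℕ) : List.range' (s + 1) n = (List.range' s n).map (· + 1) := by
  have := List.map_add_range' (a := 1) s n 1
  rw [show s + 1 = 1 + s by omega, ← this]
  congr 1
  funext x; omega

lemma dualEvacT_eq_aux (n : ℕ) : ∀ k : ℕ, ∀ t : Cell → ℕ,
    (List.range n).foldl (fun s j => ((List.range' (j + 1 + k) (n - j)).reverse).foldl
      (fun u i => tauT D N i u) s) t = app D N ((Gw n).map (· + k)) t := by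
  induction n with
  | zero => intro k t; rfl
  | succ n ih =>
    intro k t
    rw [List.range_succ_eq_map, List.foldl_cons, List.foldl_map]
    simp only [Nat.zero_add, Nat.sub_zero]
    have hfun : (fun (s : Cell → ℕ) (j : ℕ) =>
        ((List.range' (j + 1 + 1 + k) (n + 1 - (j + 1))).reverse).foldl
          (fun u i => tauT D N i u) s) =
        (fun (s : Cell → ℕ) (j : ℕ) =>
        ((List.range' (j + 1 + (k + 1)) (n - j)).reverse).foldl
          (fun u i => tauT D N i u) s) := by
      funext s j
      rw [show j + 1 + 1 + k = j + 1 + (k + 1) by omega, Nat.succ_sub_succ_eq_sub]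
    rw [hfun, ih (k + 1)]
    have hG : (Gw (n+1)).map (· + k) =
        (List.range' (1 + k) (n + 1)).reverse ++ (Gw n).map (· + (k + 1)) := by
      rw [show Gw (n+1) = (List.range' 1 (n + 1)).reverse ++ (Gw n).map (· + 1) from rfl,
        List.map_append, List.map_reverse, List.map_map]
      congr 1
      · congr 1
        have := List.map_add_range' (a := k) 1 (n+1) 1
        rw [show (1 : ℕ) + k = k + 1 by omega, ← this]
        congr 1; funext x; omega
      · congr 1; funext x; simp; omega
    rw [hG, app_append]
    rfl

lemma dualEvacT_eq : dualEvacT D N t = app D N (Gw (N - 1)) t := by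
  have h := dualEvacT_eq_aux (D := D) (N := N) (N - 1) 0 t
  simp only [Nat.add_zero, List.map_id'] at h
  rw [← h]
  unfold dualEvacT
  congr 1

/-- Reversal under complementation of letters. -/
lemma map_complement_range' (k : ℕ) :
    (List.range' 1 k).map (fun i => k + 1 - i) = (List.range' 1 k).reverse := by
  apply List.ext_getElem
  · simp
  · intro i h1 h2
    simp only [List.length_map, List.length_range'] at h1
    rw [List.getElem_map, List.getElem_reverse]
    rw [List.getElem_range', List.getElem_range']
    simp only [List.length_range']
    omega

lemma map_complement_Gw (n : ℕ) : (Gw n).map (fun i => n + 1 - i) = Fw n := by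
  induction n with
  | zero => rfl
  | succ n ih =>
    rw [show Gw (n+1) = (List.range' 1 (n + 1)).reverse ++ (Gw n).map (· + 1) from rfl,
      List.map_append, List.map_reverse, List.map_map]
    rw [show Fw (n+1) = List.range' 1 (n+1) ++ Fw n from rfl]
    congr 1
    · rw [map_complement_range' (n+1), List.reverse_reverse]
    · rw [← ih]
      congr 1
      funext x
      simp only [Function.comp_apply]
      omega

lemma map_complement_Fw (n : ℕ) :
    (Fw n).map (fun i => n + 1 - i) = Gw n := by
  rw [← map_complement_Gw n, List.map_map]
  conv_rhs => rw [← List.map_id (Gw n)]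
  apply List.map_congr_left
  intro b hb
  have := mem_Gw hb
  simp; omega

end EvacProof
namespace EvacProof

variable {A D : Set Cell} {M N : ℕ} {t u w : Cell → ℕ}

/-- 180° rotation of the bounding box `[0,M]²`, as a set operation. -/
def rotSet (M : ℕ) (A : Set Cell) : Set Cell :=
  {p | p.1 ≤ M ∧ p.2 ≤ M ∧ (M - p.1, M - p.2) ∈ A}

/-- Rotation-complementation of a filling. -/
def rot (M N : ℕ) (A : Set Cell) (u : Cell → ℕ) : Cell → ℕ :=
  fun p => if p.1 ≤ M ∧ p.2 ≤ M ∧ (M - p.1, M - p.2) ∈ A then N + 1 - u (M - p.1, M - p.2)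
    else 0

def Bounded (M : ℕ) (A : Set Cell) : Prop := ∀ p ∈ A, p.1 ≤ M ∧ p.2 ≤ M

def Proper (A : Set Cell) (N : ℕ) (u : Cell → ℕ) : Prop :=
  (∀ p ∈ A, u p ∈ Set.Icc 1 N) ∧ ∀ p ∉ A, u p = 0

lemma std_proper (hu : IsStandard A N u) : Proper A N u :=
  ⟨fun _ hp => hu.1.mapsTo hp, hu.2.2.2⟩

lemma swap_proper (ht : IsStandard A N t) {i : ℕ} (hi : 1 ≤ i) (hiN : i < N) :
    Proper A N (swapVals i t) := by
  constructor
  · intro p hp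
    have := ht.1.mapsTo hp
    simp only [Set.mem_Icc] at this ⊢
    simp only [swapVals_eq, sf]
    split_ifs <;> omega
  · intro p hp
    have h0 := ht.2.2.2 p hp
    simp only [swapVals_eq, sf, h0]
    rw [if_neg (by omega), if_neg (by omega)]

lemma bounded_rotSet : Bounded M (rotSet M A) := fun p hp => ⟨hp.1, hp.2.1⟩

lemma rotSet_rotSet (hbd : Bounded M A) : rotSet M (rotSet M A) = A := by
  ext p
  simp only [rotSet, Set.mem_setOf_eq]
  constructor
  · rintro ⟨h1, h2, _, _, h5⟩
    rwa [show (M - (M - p.1), M - (M - p.2)) = p by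
      rcases p with ⟨a, b⟩; simp only [Prod.mk.injEq]; omega] at h5
  · intro hp
    obtain ⟨h1, h2⟩ := hbd p hp
    refine ⟨h1, h2, by omega, by omega, ?_⟩
    rwa [show (M - (M - p.1), M - (M - p.2)) = p by
      rcases p with ⟨a, b⟩; simp only [Prod.mk.injEq]; omega]

lemma rot_rot (hbd : Bounded M A) (hu : Proper A N u) :
    rot M N (rotSet M A) (rot M N A u) = u := by
  funext p
  rcases p with ⟨a, b⟩
  by_cases hp : (a, b) ∈ A
  · obtain ⟨h1, h2⟩ := hbd _ hp
    have hval := hu.1 _ hp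
    simp only [Set.mem_Icc] at hval
    have hmm : ((M : ℕ) - (M - a), M - (M - b)) = (a, b) := by
      simp only [Prod.mk.injEq]; omega
    have c2 : M - a ≤ M ∧ M - b ≤ M ∧ (M - (M - a), M - (M - b)) ∈ A :=
      ⟨by omega, by omega, by rw [hmm]; exact hp⟩
    show (if a ≤ M ∧ b ≤ M ∧ (M - a, M - b) ∈ rotSet M A then
        N + 1 - rot M N A u (M - a, M - b) else 0) = u (a, b)
    rw [if_pos ⟨h1, h2, c2⟩]
    show N + 1 - (if M - a ≤ M ∧ M - b ≤ M ∧ (M - (M - a), M - (M - b)) ∈ A then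
        N + 1 - u (M - (M - a), M - (M - b)) else 0) = u (a, b)
    rw [if_pos c2, hmm]
    omega
  · show (if a ≤ M ∧ b ≤ M ∧ (M - a, M - b) ∈ rotSet M A then
        N + 1 - rot M N A u (M - a, M - b) else 0) = u (a, b)
    rw [if_neg, (hu.2 _ hp)]
    rintro ⟨h1, h2, _, _, h5⟩
    rw [show ((M : ℕ) - (M - a), M - (M - b)) = (a, b) by
      simp only [Prod.mk.injEq]; omega] at h5
    exact hp h5

lemma mem_rotSet_rho (hbd : Bounded M A) {q : Cell} (hq : q ∈ A) :
    (M - q.1, M - q.2) ∈ rotSet M A := by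
  obtain ⟨h1, h2⟩ := hbd q hq
  refine ⟨by omega, by omega, ?_⟩
  rwa [show (M - (M - q.1), M - (M - q.2)) = q by
    rcases q with ⟨a, b⟩; simp only [Prod.mk.injEq]; omega]

lemma rot_std (hbd : Bounded M A) (hu : IsStandard A N u) :
    IsStandard (rotSet M A) N (rot M N A u) := by
  obtain ⟨⟨hmap, hinj, hsurj⟩, hrow, hcol, hzero⟩ := hu
  refine ⟨⟨?_, ?_, ?_⟩, ?_, ?_, ?_⟩
  · intro p hp
    obtain ⟨h1, h2, h3⟩ := hp
    have := hmap h3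
    simp only [Set.mem_Icc] at this ⊢
    simp only [rot]
    rw [if_pos ⟨h1, h2, h3⟩]
    omega
  · intro p hp q hq h
    obtain ⟨hp1, hp2, hp3⟩ := hp
    obtain ⟨hq1, hq2, hq3⟩ := hq
    simp only [rot] at h
    rw [if_pos ⟨hp1, hp2, hp3⟩, if_pos ⟨hq1, hq2, hq3⟩] at h
    have e1 := hmap hp3
    have e2 := hmap hq3
    simp only [Set.mem_Icc] at e1 e2
    have : (M - p.1, M - p.2) = (M - q.1, M - q.2) := hinj hp3 hq3 (by omega)
    simp only [Prod.mk.injEq] at this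
    rcases p with ⟨a, b⟩; rcases q with ⟨c, d⟩
    simp only [Prod.mk.injEq]
    simp only at hp1 hp2 hq1 hq2 this
    omega
  · intro v hv
    simp only [Set.mem_Icc] at hv
    have : N + 1 - v ∈ Set.Icc 1 N := by simp only [Set.mem_Icc]; omega
    obtain ⟨q, hq, hqv⟩ := hsurj this
    refine ⟨(M - q.1, M - q.2), mem_rotSet_rho hbd hq, ?_⟩
    obtain ⟨h1, h2⟩ := hbd q hq
    simp only [rot]
    rw [if_pos]
    · rw [show (M - (M - q.1), M - (M - q.2)) = q by
        rcases q with ⟨a, b⟩; simp only [Prod.mk.injEq]; omega, hqv]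
      omega
    · obtain ⟨m1, m2, m3⟩ := mem_rotSet_rho hbd hq
      exact ⟨m1, m2, m3⟩
  · intro r c h1 h2
    obtain ⟨ha1, ha2, ha3⟩ := h1
    obtain ⟨hb1, hb2, hb3⟩ := h2
    simp only at ha1 ha2 ha3 hb1 hb2 hb3
    have hc : c < M := by omega
    have key : M - (c + 1) + 1 = M - c := by omega
    have hlt := hrow (M - r) (M - (c + 1)) hb3 (by rw [key]; exact ha3)
    rw [key] at hlt
    have e1 := hmap ha3
    have e2 := hmap hb3
    simp only [Set.mem_Icc] at e1 e2
    simp only [rot]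
    rw [if_pos ⟨ha1, ha2, ha3⟩, if_pos ⟨hb1, hb2, hb3⟩]
    omega
  · intro r c h1 h2
    obtain ⟨ha1, ha2, ha3⟩ := h1
    obtain ⟨hb1, hb2, hb3⟩ := h2
    simp only at ha1 ha2 ha3 hb1 hb2 hb3
    have hr : r < M := by omega
    have key : M - (r + 1) + 1 = M - r := by omega
    have hlt := hcol (M - (r + 1)) (M - c) hb3 (by rw [key]; exact ha3)
    rw [key] at hlt
    have e1 := hmap ha3
    have e2 := hmap hb3
    simp only [Set.mem_Icc] at e1 e2
    simp only [rot]
    rw [if_pos ⟨ha1, ha2, ha3⟩, if_pos ⟨hb1, hb2, hb3⟩]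
    omega
  · intro p hp
    have hp' : ¬(p.1 ≤ M ∧ p.2 ≤ M ∧ (M - p.1, M - p.2) ∈ A) := hp
    simp only [rot]
    rw [if_neg hp']

lemma rot_std_iff (hbd : Bounded M A) (hw : Proper A N w) :
    IsStandard (rotSet M A) N (rot M N A w) ↔ IsStandard A N w := by
  constructor
  · intro h
    have := rot_std (bounded_rotSet (M := M) (A := A)) h
    rwa [rotSet_rotSet hbd, rot_rot hbd hw] at this
  · exact rot_std hbd

lemma rot_swap (hbd : Bounded M A) (hu : Proper A N u) {i : ℕ} (hi : 1 ≤ i) (hiN : i < N) :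
    rot M N A (swapVals i u) = swapVals (N - i) (rot M N A u) := by
  funext p
  by_cases hp : p.1 ≤ M ∧ p.2 ≤ M ∧ (M - p.1, M - p.2) ∈ A
  · have hv := hu.1 _ hp.2.2
    simp only [Set.mem_Icc] at hv
    simp only [swapVals_eq, rot]
    rw [if_pos hp, if_pos hp]
    simp only [sf]
    split_ifs <;> omega
  · simp only [swapVals_eq, rot]
    rw [if_neg hp, if_neg hp]
    simp only [sf]
    rw [if_neg (by omega), if_neg (by omega)]

lemma rot_tau (hbd : Bounded M A) (ht : IsStandard A N t) {i : ℕ} (hi : 1 ≤ i) (hiN : i < N) :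
    rot M N A (tauT A N i t) = tauT (rotSet M A) N (N - i) (rot M N A t) := by
  have hsw : rot M N A (swapVals i t) = swapVals (N - i) (rot M N A t) :=
    rot_swap hbd (std_proper ht) hi hiN
  have hiff : IsStandard (rotSet M A) N (swapVals (N - i) (rot M N A t)) ↔
      IsStandard A N (swapVals i t) := by
    rw [← hsw]
    exact rot_std_iff hbd (swap_proper ht hi hiN)
  by_cases hc : IsStandard A N (swapVals i t)
  · rw [tauT, if_pos hc, tauT, if_pos (hiff.2 hc), hsw]
  · rw [tauT, if_neg hc, tauT, if_neg (fun h => hc (hiff.1 h))]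

lemma rot_app (hbd : Bounded M A) (ht : IsStandard A N t) {ws : List ℕ}
    (hws : ∀ b ∈ ws, 1 ≤ b ∧ b < N) :
    rot M N A (app A N ws t) = app (rotSet M A) N (ws.map (fun b => N - b)) (rot M N A t) := by
  induction ws generalizing t with
  | nil => rfl
  | cons b ws ih =>
    have hb := hws b (List.mem_cons_self)
    rw [app_cons, ih (tau_std ht b) (fun c hc => hws c (List.mem_cons_of_mem _ hc)),
      rot_tau hbd ht hb.1 hb.2, List.map_cons, app_cons]

lemma exists_bound (hfin : D.Finite) : ∃ M, Bounded M D := by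
  refine ⟨hfin.toFinset.sup (fun p => max p.1 p.2), ?_⟩
  intro p hp
  have := Finset.le_sup (f := fun p => max p.1 p.2) ((Set.Finite.mem_toFinset hfin).2 hp)
  exact ⟨le_trans (le_max_left _ _) this, le_trans (le_max_right _ _) this⟩

end EvacProof
namespace EvacProof

variable {B D : Set Cell} {M N : ℕ} {t u : Cell → ℕ}

/-- `ε∂ = ∂*ε` for every diagram and every N. -/
lemma rel5_all (hu : IsStandard B N u) :
    app B N (List.range' 1 (N - 1)) (app B N (Fw (N - 1)) u) =
      app B N (Fw (N - 1)) (app B N ((List.range' 1 (N - 1)).reverse) u) := by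
  match N with
  | 0 => rfl
  | 1 => rfl
  | (n + 2) => exact rel5_word hu n

/-- `ε∂* = ∂ε` for every diagram and every N. -/
lemma rel5'_all (hu : IsStandard B N u) :
    app B N (Fw (N - 1)) (app B N (List.range' 1 (N - 1)) u) =
      app B N ((List.range' 1 (N - 1)).reverse) (app B N (Fw (N - 1)) u) := by
  have h := rel5_all (app_std hu (List.range' 1 (N - 1)))
  rw [app_cancel hu] at h
  have h2 := congrArg (app B N ((List.range' 1 (N - 1)).reverse)) h
  rwa [app_cancel (app_std (app_std hu _) _) (List.range' 1 (N - 1))] at h2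

lemma mapGF : (Gw (N - 1)).map (fun b => N - b) = Fw (N - 1) := by
  match N with
  | 0 => rfl
  | (n + 1) => exact map_complement_Gw n

lemma mapRR : (List.range' 1 (N - 1)).map (fun b => N - b) =
    (List.range' 1 (N - 1)).reverse := by
  match N with
  | 0 => rfl
  | (n + 1) =>
    have := map_complement_range' n
    match n with
    | 0 => rfl
    | (m + 1) => exact map_complement_range' (m + 1)

lemma lettersG : ∀ b ∈ Gw (N - 1), 1 ≤ b ∧ b < N := by
  intro b hb
  have := mem_Gw hb
  omega

lemma lettersR : ∀ b ∈ List.range' 1 (N - 1), 1 ≤ b ∧ b < N := by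
  intro b hb
  rw [List.mem_range'_1] at hb
  omega

end EvacProof


open EvacProof in
/-- Evacuation `ε` and dual evacuation `ε*` are involutions on standard tableaux,
inverse promotion is the inverse of promotion (`∂* = ∂⁻¹`), and the relations
`ε∂ = ∂*ε` and `ε*∂ = ∂*ε*` hold (as right actions: `t.(ε∂) = t.(∂*ε)`, etc.). -/
theorem evacuation_relations (D : Set Cell) (N : ℕ)
    (t : Cell → ℕ) (ht : IsStandard D N t) :
    evacT D N (evacT D N t) = t ∧
    dualEvacT D N (dualEvacT D N t) = t ∧
    invPromT D N (promT D N t) = t ∧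
    promT D N (invPromT D N t) = t ∧
    promT D N (evacT D N t) = evacT D N (invPromT D N t) ∧
    promT D N (dualEvacT D N t) = dualEvacT D N (invPromT D N t) := by
  obtain ⟨M, hbd⟩ := exists_bound (D_finite ht)
  set D' : Set Cell := rotSet M D with hD'
  set T : Cell → ℕ := rot M N D t with hT
  have hTstd : IsStandard D' N T := rot_std hbd ht
  have hrotG : ∀ u : Cell → ℕ, IsStandard D N u →
      rot M N D (app D N (Gw (N - 1)) u) = app D' N (Fw (N - 1)) (rot M N D u) := by
    intro u hu
    rw [rot_app hbd hu lettersG, mapGF]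
  refine ⟨?_, ?_, ?_, ?_, ?_, ?_⟩
  · rw [evacT_eq, evacT_eq]
    exact evac_sq_word ht (N - 1)
  · rw [dualEvacT_eq, dualEvacT_eq]
    have hX : IsStandard D N (app D N (Gw (N - 1)) (app D N (Gw (N - 1)) t)) :=
      app_std (app_std ht _) _
    have h1 : rot M N D (app D N (Gw (N - 1)) (app D N (Gw (N - 1)) t)) = T := by
      rw [hrotG _ (app_std ht _), hrotG _ ht]
      exact evac_sq_word hTstd (N - 1)
    have h2 := congrArg (rot M N D') h1
    rwa [rot_rot hbd (std_proper hX), rot_rot hbd (std_proper ht)] at h2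
  · rw [promT_eq, invPromT_eq]
    exact app_cancel ht (List.range' 1 (N - 1))
  · rw [promT_eq, invPromT_eq]
    exact app_cancel' ht (List.range' 1 (N - 1))
  · rw [promT_eq, invPromT_eq, evacT_eq, evacT_eq]
    exact rel5_all ht
  · rw [promT_eq, invPromT_eq, dualEvacT_eq, dualEvacT_eq]
    have hlhs : rot M N D (app D N (List.range' 1 (N - 1)) (app D N (Gw (N - 1)) t)) =
        app D' N ((List.range' 1 (N - 1)).reverse) (app D' N (Fw (N - 1)) T) := by
      rw [rot_app hbd (app_std ht _) lettersR, mapRR, hrotG _ ht]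
    have hrhs : rot M N D (app D N (Gw (N - 1)) (app D N ((List.range' 1 (N - 1)).reverse) t)) =
        app D' N (Fw (N - 1)) (app D' N (List.range' 1 (N - 1)) T) := by
      rw [hrotG _ (app_std ht _)]
      rw [rot_app hbd ht (fun b hb => lettersR b (List.mem_reverse.1 hb))]
      rw [show ((List.range' 1 (N - 1)).reverse).map (fun b => N - b) =
        ((List.range' 1 (N - 1)).map (fun b => N - b)).reverse from by
          rw [List.map_reverse], mapRR, List.reverse_reverse]
    have key : rot M N D (app D N (List.range' 1 (N - 1)) (app D N (Gw (N - 1)) t)) =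
        rot M N D (app D N (Gw (N - 1)) (app D N ((List.range' 1 (N - 1)).reverse) t)) := by
      rw [hlhs, hrhs, (rel5'_all hTstd).symm]
    have h2 := congrArg (rot M N D') key
    rwa [rot_rot hbd (std_proper (app_std (app_std ht _) _)),
      rot_rot hbd (std_proper (app_std (app_std ht _) _))] at h2
end
end

section
/- If the letter 1 is in cell (i,j) of a standard tableau t, then the inverse promotion sliding path of t.e* (t after dual evacuation) ends on cell (i,j). -/
open scoped Classical
noncomputable section

section AuxiliaryLemmas

variable {D : Set Cell} {N : ℕ}

variable {D : Set Cell} {N : ℕ}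

lemma tauT_std {t : Cell → ℕ} (h : IsStandard D N t) (i : ℕ) :
    IsStandard D N (tauT D N i t) := by
  unfold tauT; split
  · assumption
  · exact h

lemma foldl_tauT_std (l : List ℕ) : ∀ {t : Cell → ℕ}, IsStandard D N t →
    IsStandard D N (l.foldl (fun s i => tauT D N i s) t) := by
  induction l with
  | nil => intro t h; exact h
  | cons a l ih => intro t h; exact ih (tauT_std h a)

lemma mem_of_one {t : Cell → ℕ} (h : IsStandard D N t) {p : Cell} (hp : t p ≠ 0) : p ∈ D := by
  by_contra hc; exact hp (h.2.2.2 p hc)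

lemma no_left {t : Cell → ℕ} (h : IsStandard D N t) {c : Cell} (h1 : t c = 1) :
    ∀ cc, cc + 1 = c.2 → (c.1, cc) ∉ D := by
  intro cc hcc hmem
  have hcD : c ∈ D := mem_of_one h (by rw [h1]; omega)
  have h2 : (c.1, cc + 1) ∈ D := by rw [hcc, Prod.mk.eta]; exact hcD
  have h3 := h.2.1 c.1 cc hmem h2
  rw [show ((c.1, cc + 1) : Cell) = c by rw [hcc, Prod.mk.eta], h1] at h3
  have h4 := (h.1.mapsTo hmem).1
  omega

lemma no_up {t : Cell → ℕ} (h : IsStandard D N t) {c : Cell} (h1 : t c = 1) :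
    ∀ r, r + 1 = c.1 → (r, c.2) ∉ D := by
  intro r hr hmem
  have hcD : c ∈ D := mem_of_one h (by rw [h1]; omega)
  have h2 : (r + 1, c.2) ∈ D := by rw [hr, Prod.mk.eta]; exact hcD
  have h3 := h.2.2.1 r c.2 hmem h2
  rw [show ((r + 1, c.2) : Cell) = c by rw [hr, Prod.mk.eta], h1] at h3
  have h4 := (h.1.mapsTo hmem).1
  omega

lemma swapVals_eq (i : ℕ) (t : Cell → ℕ) : swapVals i t = (Equiv.swap i (i + 1)) ∘ t := by
  funext p; simp [swapVals, Equiv.swap_apply_def]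

lemma swapVals_bijOn {t : Cell → ℕ} (hb : Set.BijOn t D (Set.Icc 1 N)) {i : ℕ}
    (h1 : 1 ≤ i) (h2 : i + 1 ≤ N) : Set.BijOn (swapVals i t) D (Set.Icc 1 N) := by
  rw [swapVals_eq]
  refine Set.BijOn.comp (Equiv.bijOn' (e := Equiv.swap i (i+1)) ?_ ?_) hb
  · intro x hx
    simp only [Set.mem_Icc] at hx ⊢
    rw [Equiv.swap_apply_def]; split_ifs <;> omega
  · intro x hx
    simp only [Set.mem_Icc] at hx ⊢
    rw [Equiv.symm_swap, Equiv.swap_apply_def]; split_ifs <;> omega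

/-- Delete the cell `c` (which carries entry 1) and shift all entries down by one. -/

def shE (c : Cell) (v : Cell → ℕ) : Cell → ℕ := fun p => if p = c then 0 else v p - 1

lemma shift_std {c : Cell} (hcD : c ∈ D)
    (hnl : ∀ cc, cc + 1 = c.2 → (c.1, cc) ∉ D)
    (hnu : ∀ r, r + 1 = c.1 → (r, c.2) ∉ D)
    {v : Cell → ℕ} (hb : Set.BijOn v D (Set.Icc 1 N)) (hv1 : v c = 1)
    (hout : ∀ p, p ∉ D → v p = 0) (hN : 1 ≤ N) :
    IsStandard D N v ↔ IsStandard (D \ {c}) (N - 1) (shE c v) := by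
  have hge2 : ∀ p ∈ D, p ≠ c → 2 ≤ v p := by
    intro p hp hpc
    have h1 := (hb.mapsTo hp).1
    rcases Nat.lt_or_ge (v p) 2 with h | h
    · exact absurd (hb.injOn hp hcD (by rw [hv1]; omega)) hpc
    · exact h
  have hmemd : ∀ p : Cell, p ∈ D \ {c} ↔ p ∈ D ∧ p ≠ c := by
    intro p; simp [Set.mem_diff]
  have hbij' : Set.BijOn (shE c v) (D \ {c}) (Set.Icc 1 (N - 1)) := by
    refine ⟨?_, ?_, ?_⟩
    · intro p hp
      obtain ⟨hpD, hpc⟩ := (hmemd p).mp hp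
      have h2 := hge2 p hpD hpc
      have h3 := (hb.mapsTo hpD).2
      simp only [shE, if_neg hpc, Set.mem_Icc]
      omega
    · intro p hp q hq hpq
      obtain ⟨hpD, hpc⟩ := (hmemd p).mp hp
      obtain ⟨hqD, hqc⟩ := (hmemd q).mp hq
      simp only [shE, if_neg hpc, if_neg hqc] at hpq
      have h2 := hge2 p hpD hpc
      have h3 := hge2 q hqD hqc
      exact hb.injOn hpD hqD (by omega)
    · intro m hm
      simp only [Set.mem_Icc] at hm
      obtain ⟨p, hpD, hpv⟩ := hb.surjOn (show m + 1 ∈ Set.Icc 1 N by simp only [Set.mem_Icc]; omega)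
      have hpc : p ≠ c := by intro h; rw [h, hv1] at hpv; omega
      exact ⟨p, (hmemd p).mpr ⟨hpD, hpc⟩, by simp only [shE, if_neg hpc, hpv]; omega⟩
  constructor
  · rintro ⟨_, hrow, hcol, _⟩
    refine ⟨hbij', ?_, ?_, ?_⟩
    · intro r cc hA hB
      obtain ⟨hAD, hAc⟩ := (hmemd _).mp hA
      obtain ⟨hBD, hBc⟩ := (hmemd _).mp hB
      have := hrow r cc hAD hBD
      have h2 := hge2 _ hAD hAc
      simp only [shE, if_neg hAc, if_neg hBc]
      omega
    · intro r cc hA hB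
      obtain ⟨hAD, hAc⟩ := (hmemd _).mp hA
      obtain ⟨hBD, hBc⟩ := (hmemd _).mp hB
      have := hcol r cc hAD hBD
      have h2 := hge2 _ hAD hAc
      simp only [shE, if_neg hAc, if_neg hBc]
      omega
    · intro p hp
      by_cases hpc : p = c
      · simp [shE, hpc]
      · have hpD : p ∉ D := fun h => hp ((hmemd p).mpr ⟨h, hpc⟩)
        simp [shE, if_neg hpc, hout p hpD]
  · rintro ⟨_, hrow, hcol, _⟩
    refine ⟨hb, ?_, ?_, fun p hp => hout p hp⟩
    · intro r cc hA hB
      by_cases hBc : ((r, cc + 1) : Cell) = c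
      · exact absurd (hBc ▸ hA) (hnl cc (by rw [← hBc]))
      · by_cases hAc : ((r, cc) : Cell) = c
        · rw [hAc, hv1]
          have := hge2 _ hB hBc
          omega
        · have := hrow r cc ((hmemd _).mpr ⟨hA, hAc⟩) ((hmemd _).mpr ⟨hB, hBc⟩)
          simp only [shE, if_neg hAc, if_neg hBc] at this
          have h2 := hge2 _ hA hAc
          have h3 := hge2 _ hB hBc
          omega
    · intro r cc hA hB
      by_cases hBc : ((r + 1, cc) : Cell) = c
      · exact absurd (hBc ▸ hA) (hnu r (by rw [← hBc]))
      · by_cases hAc : ((r, cc) : Cell) = c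
        · rw [hAc, hv1]
          have := hge2 _ hB hBc
          omega
        · have := hcol r cc ((hmemd _).mpr ⟨hA, hAc⟩) ((hmemd _).mpr ⟨hB, hBc⟩)
          simp only [shE, if_neg hAc, if_neg hBc] at this
          have h2 := hge2 _ hA hAc
          have h3 := hge2 _ hB hBc
          omega

lemma shift_swap {c : Cell} {v : Cell → ℕ} (hv1 : v c = 1) {i : ℕ} (h1 : 1 ≤ i) :
    swapVals i (shE c v) = shE c (swapVals (i + 1) v) := by
  funext p
  by_cases hp : p = c
  · have l0 : shE c v p = 0 := if_pos hp
    have r0 : shE c (swapVals (i + 1) v) p = 0 := if_pos hp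
    rw [r0]
    simp only [swapVals, l0]
    rw [if_neg (by omega : ¬(0:ℕ) = i), if_neg (by omega : ¬(0:ℕ) = i + 1)]
  · simp only [swapVals, shE, if_neg hp]
    split_ifs <;> omega

lemma shift_tauT {c : Cell} (hcD : c ∈ D)
    (hnl : ∀ cc, cc + 1 = c.2 → (c.1, cc) ∉ D)
    (hnu : ∀ r, r + 1 = c.1 → (r, c.2) ∉ D)
    {u : Cell → ℕ} (hu : IsStandard D N u) (hu1 : u c = 1) {i : ℕ}
    (h1 : 1 ≤ i) (h2 : i + 2 ≤ N) :
    tauT (D \ {c}) (N - 1) i (shE c u) = shE c (tauT D N (i + 1) u) ∧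
      (tauT D N (i + 1) u) c = 1 := by
  have hswapc : swapVals (i + 1) u c = 1 := by
    simp only [swapVals, hu1]
    split_ifs <;> omega
  have hbij : Set.BijOn (swapVals (i + 1) u) D (Set.Icc 1 N) :=
    swapVals_bijOn hu.1 (by omega) (by omega)
  have hout : ∀ p, p ∉ D → swapVals (i + 1) u p = 0 := by
    intro p hp
    simp only [swapVals, hu.2.2.2 p hp]
    rw [if_neg (by omega : ¬(0:ℕ) = i + 1), if_neg (by omega : ¬(0:ℕ) = i + 1 + 1)]
  have hiff := shift_std hcD hnl hnu hbij hswapc hout (by omega)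
  constructor
  · unfold tauT
    rw [shift_swap hu1 h1, ← hiff]
    split_ifs with hs
    · rfl
    · rfl
  · unfold tauT
    split_ifs with hs
    · exact hswapc
    · exact hu1

lemma shift_foldl {c : Cell} (hcD : c ∈ D)
    (hnl : ∀ cc, cc + 1 = c.2 → (c.1, cc) ∉ D)
    (hnu : ∀ r, r + 1 = c.1 → (r, c.2) ∉ D) :
    ∀ (l : List ℕ) {u : Cell → ℕ}, IsStandard D N u → u c = 1 →
      (∀ x ∈ l, 1 ≤ x ∧ x + 2 ≤ N) →
      IsStandard D N ((l.map (· + 1)).foldl (fun s i => tauT D N i s) u) ∧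
      ((l.map (· + 1)).foldl (fun s i => tauT D N i s) u) c = 1 ∧
      l.foldl (fun s i => tauT (D \ {c}) (N - 1) i s) (shE c u)
        = shE c ((l.map (· + 1)).foldl (fun s i => tauT D N i s) u) := by
  intro l
  induction l with
  | nil => intro u hu hu1 _; exact ⟨hu, hu1, rfl⟩
  | cons a l ih =>
    intro u hu hu1 hmem
    obtain ⟨ha1, ha2⟩ := hmem a (List.mem_cons_self)
    obtain ⟨hc1, hc2⟩ := shift_tauT hcD hnl hnu hu hu1 ha1 ha2
    have hstd : IsStandard D N (tauT D N (a + 1) u) := tauT_std hu _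
    obtain ⟨ih1, ih2, ih3⟩ := ih hstd hc2 (fun x hx => hmem x (List.mem_cons_of_mem a hx))
    refine ⟨ih1, ih2, ?_⟩
    rw [List.map_cons, List.foldl_cons, List.foldl_cons, hc1, ih3]

lemma foldl_fix_one {c₀ : Cell} : ∀ (l : List ℕ), (∀ x ∈ l, 2 ≤ x) → ∀ {u : Cell → ℕ}, u c₀ = 1 →
    (l.foldl (fun s i => tauT D N i s) u) c₀ = 1 := by
  intro l
  induction l with
  | nil => intro _ u h; exact h
  | cons a l ih =>
    intro hmem u h
    rw [List.foldl_cons]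
    refine ih (fun x hx => hmem x (List.mem_cons_of_mem a hx)) ?_
    have ha := hmem a (List.mem_cons_self)
    unfold tauT
    split_ifs
    · simp only [swapVals, h]; split_ifs <;> omega
    · exact h

def bigL (n : ℕ) : List ℕ :=
  (List.range (n - 1)).flatMap fun j => (List.range' (j + 1) (n - 1 - j)).reverse

lemma foldl_flatMap {α β : Type} (f : α → β → α) (g : ℕ → List β) :
    ∀ (L : List ℕ) (a : α), (L.flatMap g).foldl f a = L.foldl (fun s j => (g j).foldl f s) a := by
  intro L
  induction L with
  | nil => intro a; rfl
  | cons j L ih => intro a; rw [List.flatMap_cons, List.foldl_append, List.foldl_cons, ih]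

lemma dualEvacT_eq (t : Cell → ℕ) :
    dualEvacT D N t = (bigL N).foldl (fun s i => tauT D N i s) t := by
  unfold dualEvacT bigL
  rw [foldl_flatMap]

lemma bigL_bound (n : ℕ) : ∀ x ∈ bigL n, 1 ≤ x ∧ x + 1 ≤ n := by
  intro x hx
  unfold bigL at hx
  simp only [List.mem_flatMap, List.mem_reverse, List.mem_range, List.mem_range'_1] at hx
  obtain ⟨j, hj, h1, h2⟩ := hx
  omega

lemma bigL_succ (M : ℕ) :
    bigL (M + 2) = (List.range' 1 (M + 1)).reverse ++ (bigL (M + 1)).map (· + 1) := by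
  unfold bigL
  have e1 : M + 2 - 1 = M + 1 := rfl
  have e2 : M + 1 - 1 = M := rfl
  rw [e1, e2, List.range_succ_eq_map, List.flatMap_cons]
  congr 1
  rw [List.map_flatMap, List.flatMap_map]
  congr 1
  funext j
  have h : (List.range' (j + 1) (M - j)).map (· + 1) = List.range' (j + 2) (M - j) := by
    rw [show ((· + 1) : ℕ → ℕ) = (1 + ·) by funext x; omega, List.map_add_range']
    congr 1
    omega
  rw [List.map_reverse, h]
  have e4 : M + 1 - (j.succ) = M - j := by omega
  simp [Nat.succ_eq_add_one] at e4 ⊢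

lemma step_up {s : Cell → ℕ} (hs : IsStandard D N s) {c a b : Cell}
    (hbne : b ≠ c) (hstep : InvPromStep D s a b) :
    InvPromStep (D \ {c}) (shE c s) a b := by
  obtain ⟨hbD, hor⟩ := hstep
  have hsb : 1 ≤ s b := (hs.1.mapsTo hbD).1
  have hshb : shE c s b = s b - 1 := if_neg hbne
  refine ⟨⟨hbD, by simpa using hbne⟩, ?_⟩
  rcases hor with ⟨heq, hcond⟩ | ⟨heq, hcond⟩
  · left
    refine ⟨heq, fun r hr => ?_⟩
    by_cases hz : ((r, a.2) : Cell) ∈ D \ {c}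
    · right
      rcases hcond r hr with h | h
      · exact absurd hz.1 h
      · have h1 : 1 ≤ s (r, a.2) := (hs.1.mapsTo hz.1).1
        have hzc : ((r, a.2) : Cell) ≠ c := by simpa using hz.2
        rw [hshb, show shE c s (r, a.2) = s (r, a.2) - 1 from if_neg hzc]
        omega
    · left; exact hz
  · right
    refine ⟨heq, fun cc hcc => ?_⟩
    by_cases hz : ((a.1, cc) : Cell) ∈ D \ {c}
    · right
      rcases hcond cc hcc with h | h
      · exact absurd hz.1 h
      · have h1 : 1 ≤ s (a.1, cc) := (hs.1.mapsTo hz.1).1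
        have hzc : ((a.1, cc) : Cell) ≠ c := by simpa using hz.2
        rw [hshb, show shE c s (a.1, cc) = s (a.1, cc) - 1 from if_neg hzc]
        omega
    · left; exact hz

lemma chain_up {s : Cell → ℕ} (hs : IsStandard D N s) {c : Cell} :
    ∀ {l : List Cell}, List.Chain' (InvPromStep D s) l → (∀ x ∈ l, x ≠ c) →
      List.Chain' (InvPromStep (D \ {c}) (shE c s)) l := by
  intro l
  induction l with
  | nil => intro _ _; exact List.isChain_nil
  | cons a l ih =>
    intro hch hmem
    rcases l with _ | ⟨b, l'⟩
    · exact List.isChain_singleton _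
    · rw [List.Chain', List.isChain_cons_cons] at hch ⊢
      exact ⟨step_up hs (hmem b (by simp)) hch.1,
        ih hch.2 (fun x hx => hmem x (List.mem_cons_of_mem a hx))⟩

lemma c_last {s : Cell → ℕ} (hs : IsStandard D N s) {c : Cell} (hc1 : s c = 1) :
    ∀ {l : List Cell}, List.Chain' (InvPromStep D s) l → ∀ x ∈ l.dropLast, x ≠ c := by
  intro l
  induction l with
  | nil => simp
  | cons a l ih =>
    intro hch x hx
    rcases l with _ | ⟨b, l'⟩
    · simp at hx
    · rw [List.Chain', List.isChain_cons_cons] at hch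
      rw [List.dropLast_cons₂, List.mem_cons] at hx
      rcases hx with rfl | hx
      · intro hxc
        obtain ⟨hbD, hor⟩ := hch.1
        have hsb : 1 ≤ s b := (hs.1.mapsTo hbD).1
        rcases hor with ⟨heq, _⟩ | ⟨heq, _⟩
        · have hxD : ((b.1, b.2 + 1) : Cell) ∈ D := by
            rw [← heq, hxc]; exact mem_of_one hs (by rw [hc1]; omega)
          have := hs.2.1 b.1 b.2 (by simpa using hbD) hxD
          rw [Prod.mk.eta, ← heq, hxc, hc1] at this
          omega
        · have hxD : ((b.1 + 1, b.2) : Cell) ∈ D := by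
            rw [← heq, hxc]; exact mem_of_one hs (by rw [hc1]; omega)
          have := hs.2.2.1 b.1 b.2 (by simpa using hbD) hxD
          rw [Prod.mk.eta, ← heq, hxc, hc1] at this
          omega
      · exact ih hch.2 x hx

lemma path_restrict {s : Cell → ℕ} (hs : IsStandard D N s) {c : Cell} (hcD : c ∈ D)
    (hc1 : s c = 1) (hN : 2 ≤ N) {path : List Cell}
    (hp : IsInvPromPath D s N path) :
    (path.getLast! ≠ c ∧ IsInvPromPath (D \ {c}) (shE c s) (N - 1) path) ∨
    (path.getLast! = c ∧ IsInvPromPath (D \ {c}) (shE c s) (N - 1) path.dropLast ∧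
      (path.dropLast.getLast! = (c.1, c.2 + 1) ∨ path.dropLast.getLast! = (c.1 + 1, c.2))) := by
  obtain ⟨hne, hhD, hhN, hch, hendl, hendu⟩ := hp
  have hlast! : path.getLast! = path.getLast hne :=
    List.getLast!_of_getLast? (List.getLast?_eq_getLast hne)
  have hhead_ne : path.headI ≠ c := fun h => by rw [h, hc1] at hhN; omega
  have hheadval : shE c s path.headI = N - 1 := by
    rw [show shE c s path.headI = s path.headI - 1 from if_neg hhead_ne, hhN]
  have hdrop : ∀ x ∈ path.dropLast, x ≠ c := c_last hs hc1 hch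
  by_cases hz : path.getLast! = c
  · right
    have hsplit : path.dropLast ++ [c] = path := by
      rw [← hz, hlast!]; exact List.dropLast_append_getLast hne
    have hq_ne : path.dropLast ≠ [] := by
      intro h0
      rw [h0, List.nil_append] at hsplit
      exact hhead_ne (by rw [← hsplit]; rfl)
    have hhead_eq : path.dropLast.headI = path.headI := by
      rcases hq : path.dropLast with _ | ⟨x, q'⟩
      · exact absurd hq hq_ne
      · rw [← hsplit, hq]; rfl
    have hch2 : List.Chain' (InvPromStep D s) (path.dropLast ++ [c]) := by rw [hsplit]; exact hch
    rw [List.Chain', List.isChain_append] at hch2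
    obtain ⟨hch1, _, hstep⟩ := hch2
    have hlastq : path.dropLast.getLast! = path.dropLast.getLast hq_ne :=
      List.getLast!_of_getLast? (List.getLast?_eq_getLast hq_ne)
    have hstepc : InvPromStep D s (path.dropLast.getLast hq_ne) c := by
      refine hstep _ ?_ c (by simp)
      rw [List.getLast?_eq_getLast hq_ne]; rfl
    obtain ⟨_, hor⟩ := hstepc
    refine ⟨hz, ⟨hq_ne, ?_, ?_, chain_up hs hch1 hdrop, ?_, ?_⟩, ?_⟩
    · rw [hhead_eq]; exact ⟨hhD, by simpa using hhead_ne⟩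
    · rw [hhead_eq]; exact hheadval
    · -- no left neighbors of q-last in D \ {c}
      intro cc hcc
      rw [hlastq] at hcc ⊢
      rcases hor with ⟨heq, _⟩ | ⟨heq, hcond⟩
      · -- last = (c.1, c.2+1) : the left neighbor is c itself
        have h1 : (path.dropLast.getLast hq_ne).2 = c.2 + 1 := by rw [heq]
        have h2 : (path.dropLast.getLast hq_ne).1 = c.1 := by rw [heq]
        have hcc2 : cc = c.2 := by omega
        rw [h2, hcc2]
        intro hmem
        exact (by simpa using hmem.2 : c.1 ≠ c.1 ∨ c.2 ≠ c.2).elim (fun h => h rfl) (fun h => h rfl)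
      · rcases hcond cc hcc with h | h
        · intro hmem; exact h hmem.1
        · intro hmem
          have := (hs.1.mapsTo hmem.1).1
          rw [hc1] at h
          omega
    · intro r hr
      rw [hlastq] at hr ⊢
      rcases hor with ⟨heq, hcond⟩ | ⟨heq, _⟩
      · rcases hcond r hr with h | h
        · intro hmem; exact h hmem.1
        · intro hmem
          have := (hs.1.mapsTo hmem.1).1
          rw [hc1] at h
          omega
      · have h1 : (path.dropLast.getLast hq_ne).1 = c.1 + 1 := by rw [heq]
        have h2 : (path.dropLast.getLast hq_ne).2 = c.2 := by rw [heq]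
        have hr2 : r = c.1 := by omega
        rw [h2, hr2]
        intro hmem
        exact (by simpa using hmem.2 : c.1 ≠ c.1 ∨ c.2 ≠ c.2).elim (fun h => h rfl) (fun h => h rfl)
    · rw [hlastq]
      rcases hor with ⟨heq, _⟩ | ⟨heq, _⟩
      · left; exact heq
      · right; exact heq
  · left
    have hall : ∀ x ∈ path, x ≠ c := by
      intro x hx
      have := List.dropLast_append_getLast hne
      rw [← this] at hx
      rcases List.mem_append.mp hx with h | h
      · exact hdrop x h
      · have : x = path.getLast hne := by simpa using h
        rw [this, ← hlast!]; exact hz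
    refine ⟨hz, hne, ⟨hhD, by simpa using hhead_ne⟩, hheadval, chain_up hs hch hall, ?_, ?_⟩
    · intro cc hcc hmem
      exact hendl cc hcc hmem.1
    · intro r hr hmem
      exact hendu r hr hmem.1

lemma swap12_std {w : Cell → ℕ} (hw : IsStandard D N w) {c1 d : Cell}
    (h1 : w c1 = 1) (h2 : w d = 2) (hN : 2 ≤ N)
    (hnadj : ¬(d = (c1.1, c1.2 + 1) ∨ d = (c1.1 + 1, c1.2))) :
    IsStandard D N (swapVals 1 w) := by
  obtain ⟨hb, hrow, hcol, hout⟩ := hw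
  have hc1D : c1 ∈ D := by
    by_contra h; rw [hout _ h] at h1; omega
  have hdD : d ∈ D := by
    by_contra h; rw [hout _ h] at h2; omega
  refine ⟨swapVals_bijOn hb le_rfl hN, ?_, ?_, ?_⟩
  · intro r cc hA hB
    have hab := hrow r cc hA hB
    have ha1 : 1 ≤ w (r, cc) := (hb.mapsTo hA).1
    have hb1 : 1 ≤ w (r, cc + 1) := (hb.mapsTo hB).1
    simp only [swapVals]
    split_ifs with e1 e2 e3 e4 e5 <;> try omega
    -- remaining: w (r,cc) = 1 and w (r,cc+1) = 2 : identify cells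
    · exfalso
      have hA1 : ((r, cc) : Cell) = c1 := hb.injOn hA hc1D (by rw [e1, h1])
      have hB1 : ((r, cc + 1) : Cell) = d := hb.injOn hB hdD (by rw [e3, h2])
      apply hnadj
      left
      rw [← hB1, ← hA1]
  · intro r cc hA hB
    have hab := hcol r cc hA hB
    have ha1 : 1 ≤ w (r, cc) := (hb.mapsTo hA).1
    have hb1 : 1 ≤ w (r + 1, cc) := (hb.mapsTo hB).1
    simp only [swapVals]
    split_ifs with e1 e2 e3 e4 e5 <;> try omega
    · exfalso
      have hA1 : ((r, cc) : Cell) = c1 := hb.injOn hA hc1D (by rw [e1, h1])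
      have hB1 : ((r + 1, cc) : Cell) = d := hb.injOn hB hdD (by rw [e3, h2])
      apply hnadj
      right
      rw [← hB1, ← hA1]
  · intro p hp
    simp only [swapVals, hout p hp]
    rw [if_neg (by omega : ¬(0:ℕ) = 1), if_neg (by omega : ¬(0:ℕ) = 1 + 1)]

lemma main_aux : ∀ (N : ℕ) (D : Set Cell) (t : Cell → ℕ), IsStandard D N t →
    ∀ (i j : ℕ), t (i, j) = 1 → ∀ (path : List Cell),
      IsInvPromPath D (dualEvacT D N t) N path → path.getLast! = (i, j) := by
  intro N
  induction N using Nat.strong_induction_on with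
  | _ N IH =>
  rcases N with _ | N0
  · -- N = 0
    intro D t ht i j hone path hpath
    exfalso
    have hmem : ((i, j) : Cell) ∈ D := mem_of_one ht (by rw [hone]; omega)
    have h2 := (ht.1.mapsTo hmem).1
    have h3 := (ht.1.mapsTo hmem).2
    omega
  rcases N0 with _ | M
  · -- N = 1
    intro D t ht i j hone path hpath
    have hde : dualEvacT D 1 t = t := rfl
    rw [hde] at hpath
    obtain ⟨hne, hhD, hh1, hch, _, _⟩ := hpath
    have hmem : ((i, j) : Cell) ∈ D := mem_of_one ht (by rw [hone]; omega)
    rcases path with _ | ⟨a, l⟩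
    · exact absurd rfl hne
    rcases l with _ | ⟨b, l'⟩
    · have ha1 : t a = 1 := hh1
      have haD : a ∈ D := hhD
      have : a = (i, j) := ht.1.injOn haD hmem (by rw [ha1, hone])
      simpa [List.getLast!_cons_eq_getLastD] using this
    · exfalso
      rw [List.Chain', List.isChain_cons_cons] at hch
      obtain ⟨⟨hbD, hor⟩, _⟩ := hch
      have ha1 : t a = 1 := hh1
      have haD : a ∈ D := hhD
      have hb1 := (ht.1.mapsTo hbD).1
      have hb2 := (ht.1.mapsTo hbD).2
      have hEq : b = a := ht.1.injOn hbD haD (by omega)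
      rcases hor with ⟨heq, _⟩ | ⟨heq, _⟩
      · rw [hEq] at heq
        have := congrArg Prod.snd heq
        simp at this
      · rw [hEq] at heq
        have := congrArg Prod.fst heq
        simp at this
  · -- N = M + 2
    intro D t ht i j hone path hpath
    have hc1D : ((i, j) : Cell) ∈ D := mem_of_one ht (by rw [hone]; omega)
    have hnl1 : ∀ cc, cc + 1 = j → ((i, cc) : Cell) ∉ D := by
      have := no_left ht (c := (i, j)) hone; simpa using this
    have hnu1 : ∀ r, r + 1 = i → ((r, j) : Cell) ∉ D := by
      have := no_up ht (c := (i, j)) hone; simpa using this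
    -- w
    obtain ⟨w, hwdef⟩ : ∃ w, w = ((List.range' 2 M).reverse).foldl
        (fun s i => tauT D (M + 2) i s) t := ⟨_, rfl⟩
    have hw_std : IsStandard D (M + 2) w := by rw [hwdef]; exact foldl_tauT_std _ ht
    have hw1 : w (i, j) = 1 := by
      rw [hwdef]
      exact foldl_fix_one _
        (fun x hx => (List.mem_range'_1.mp (List.mem_reverse.mp hx)).1) hone
    -- u0
    obtain ⟨u0, hu0def⟩ : ∃ u0, u0 = tauT D (M + 2) 1 w := ⟨_, rfl⟩
    have hu0_std : IsStandard D (M + 2) u0 := by rw [hu0def]; exact tauT_std hw_std _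
    have hw_def : dStar D (M + 2) (M + 2) t = u0 := by
      unfold dStar
      have e : (M + 2 : ℕ) - 1 = M + 1 := rfl
      have hsplit : List.range' 1 (M + 1) = 1 :: List.range' 2 M := by
        rw [List.range'_succ]
      rw [e, hsplit, List.reverse_cons, List.foldl_append, hu0def, hwdef]
      rfl
    obtain ⟨c', hc'D, hc'1⟩ := hu0_std.1.surjOn (show (1 : ℕ) ∈ Set.Icc 1 (M + 2) by
      simp only [Set.mem_Icc]; omega)
    obtain ⟨d, hdD, hd2⟩ := hu0_std.1.surjOn (show (2 : ℕ) ∈ Set.Icc 1 (M + 2) by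
      simp only [Set.mem_Icc]; omega)
    have hnl' := no_left hu0_std hc'1
    have hnu' := no_up hu0_std hc'1
    -- decomposition of dual evacuation
    have hbig : dualEvacT D (M + 2) t
        = ((bigL (M + 1)).map (· + 1)).foldl (fun s i => tauT D (M + 2) i s) u0 := by
      have e0 : ((List.range' 1 (M + 1)).reverse).foldl (fun s i => tauT D (M + 2) i s) t
          = u0 := by rw [← hw_def]; rfl
      rw [dualEvacT_eq, bigL_succ, List.foldl_append, e0]
    obtain ⟨hs_std0, hs10, hsh⟩ := shift_foldl hc'D hnl' hnu' (bigL (M + 1)) hu0_std hc'1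
      (fun x hx => ⟨(bigL_bound _ x hx).1, by have := (bigL_bound _ x hx).2; omega⟩)
    have hs_std : IsStandard D (M + 2) (dualEvacT D (M + 2) t) := by rw [hbig]; exact hs_std0
    have hs1 : (dualEvacT D (M + 2) t) c' = 1 := by rw [hbig]; exact hs10
    have hu1_std : IsStandard (D \ {c'}) (M + 2 - 1) (shE c' u0) :=
      (shift_std hc'D hnl' hnu' hu0_std.1 hc'1 hu0_std.2.2.2 (by omega)).mp hu0_std
    have hdual1 : dualEvacT (D \ {c'}) (M + 2 - 1) (shE c' u0)
        = shE c' (dualEvacT D (M + 2) t) := by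
      rw [hbig, dualEvacT_eq]
      exact hsh
    have hdc' : d ≠ c' := fun h => by rw [h, hc'1] at hd2; omega
    have hd1 : shE c' u0 (d.1, d.2) = 1 := by
      rw [Prod.mk.eta, show shE c' u0 d = u0 d - 1 from if_neg hdc', hd2]
    have IH' := IH (M + 1) (by omega) (D \ {c'}) (shE c' u0) hu1_std d.1 d.2 hd1
    rcases path_restrict hs_std hc'D hs1 (by omega) hpath with ⟨hzne, hp'⟩ | ⟨hzeq, hp', hadj⟩
    · -- last of path is not c'
      rw [← hdual1] at hp'
      have hlast : path.getLast! = (d.1, d.2) := IH' path hp'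
      rw [Prod.mk.eta] at hlast
      by_cases hswap : IsStandard D (M + 2) (swapVals 1 w)
      · -- swap occurred: d = (i,j)
        have hu0w : u0 = swapVals 1 w := by rw [hu0def]; unfold tauT; rw [if_pos hswap]
        have hu0c1 : u0 (i, j) = 2 := by
          rw [hu0w]; simp [swapVals, hw1]
        have hd : d = ((i, j) : Cell) := hu0_std.1.injOn hdD hc1D (by rw [hd2, hu0c1])
        rw [hlast, hd]
      · -- no swap: contradiction with end conditions
        exfalso
        have hu0w : u0 = w := by rw [hu0def]; unfold tauT; rw [if_neg hswap]
        have hdadj : d = (((i, j) : Cell).1, ((i, j) : Cell).2 + 1)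
            ∨ d = (((i, j) : Cell).1 + 1, ((i, j) : Cell).2) := by
          by_contra hno
          exact hswap (swap12_std hw_std hw1 (by rw [← hu0w]; exact hd2) (by omega) hno)
        obtain ⟨_, _, _, _, hendl, hendu⟩ := hpath
        rcases hdadj with h | h
        · exact (hendl j (by rw [hlast, h]))
            (show (path.getLast!.1, j) ∈ D by rw [hlast, h]; exact hc1D)
        · exact (hendu i (by rw [hlast, h]))
            (show (i, path.getLast!.2) ∈ D by rw [hlast, h]; exact hc1D)
    · -- last of path is c'
      by_cases hswap : IsStandard D (M + 2) (swapVals 1 w)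
      · -- swap occurred: impossible
        exfalso
        rw [← hdual1] at hp'
        have hlast : path.dropLast.getLast! = (d.1, d.2) := IH' path.dropLast hp'
        rw [Prod.mk.eta] at hlast
        have hu0w : u0 = swapVals 1 w := by rw [hu0def]; unfold tauT; rw [if_pos hswap]
        have hu0c1 : u0 (i, j) = 2 := by
          rw [hu0w]; simp [swapVals, hw1]
        have hd : d = ((i, j) : Cell) := hu0_std.1.injOn hdD hc1D (by rw [hd2, hu0c1])
        rw [hlast, hd] at hadj
        rcases hadj with h | h
        · -- (i,j) = (c'.1, c'.2 + 1): c' is a left neighbor of (i,j)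
          have h1 : i = c'.1 := congrArg Prod.fst h
          have h2 : j = c'.2 + 1 := congrArg Prod.snd h
          refine hnl1 c'.2 h2.symm ?_
          rw [show ((i, c'.2) : Cell) = c' from by rw [h1, Prod.mk.eta]]
          exact hc'D
        · have h1 : i = c'.1 + 1 := congrArg Prod.fst h
          have h2 : j = c'.2 := congrArg Prod.snd h
          refine hnu1 c'.1 h1.symm ?_
          rw [show ((c'.1, j) : Cell) = c' from by rw [h2, Prod.mk.eta]]
          exact hc'D
      · -- no swap: c' = (i,j)
        have hu0w : u0 = w := by rw [hu0def]; unfold tauT; rw [if_neg hswap]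
        have hcc1 : c' = ((i, j) : Cell) := hu0_std.1.injOn hc'D hc1D
          (by rw [hc'1, hu0w, hw1])
        rw [hzeq, hcc1]

end AuxiliaryLemmas

/-- If the letter `1` is in cell `(i, j)` of the standard tableau `t`, then the
inverse promotion sliding path of `t.ε*` (the dual evacuation of `t`) ends on cell
`(i, j)`. -/
theorem inverse_promotion_path_of_dual_evacuation_ends (D : Set Cell) (N : ℕ)
    (t : Cell → ℕ) (ht : IsStandard D N t) (i j : ℕ) (hone : t (i, j) = 1)
    (path : List Cell) (hpath : IsInvPromPath D (dualEvacT D N t) N path) :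
    path.getLast! = (i, j) :=
  main_aux N D t ht i j hone path hpath
end
end

section
/- Let w be a reduced word in the commutation class corresponding to a right-justified shape, let 1 < i < N-1, and let w' = w.tau_{o(i+1)}, where tau_{o(i+1)} is the even promotion operator if i+1 is even and the odd promotion operator if i+1 is odd. Then w_{i-1} < w_{i+1} if and only if w'_i <= w'_{i+2}. -/
open scoped Classical
noncomputable section

/-- The operator `τᵢ` on words (1-indexed positions): interchange the letters in
positions `i` and `i+1` if they commute (differ by at least `2`), else do nothing.
Under Viennot's bijection with linear extensions of the heap, this is the operator
interchanging the values `i` and `i+1` in the linear extension when possible. -/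
def tauW (i : ℕ) (w : List ℕ) : List ℕ :=
  if i < w.length ∧
      (w.getD (i - 1) 0 + 2 ≤ w.getD i 0 ∨ w.getD i 0 + 2 ≤ w.getD (i - 1) 0)
  then (w.set (i - 1) (w.getD i 0)).set i (w.getD (i - 1) 0)
  else w

/-- The odd promotion operator on words: `τₒ = ∏_{i odd} τᵢ`. -/
def tauOW (w : List ℕ) : List ℕ :=
  ((List.range' 1 (w.length - 1)).filter (fun i => i % 2 = 1)).foldl
    (fun s i => tauW i s) w

/-- The even promotion operator on words: `τₑ = ∏_{i even} τᵢ`. -/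
def tauEW (w : List ℕ) : List ℕ :=
  ((List.range' 1 (w.length - 1)).filter (fun i => i % 2 = 0)).foldl
    (fun s i => tauW i s) w

/-- `τ_{o(j)}`: the odd promotion operator if `j` is odd, the even one if `j` is even. -/
def tauOrdW (j : ℕ) (w : List ℕ) : List ℕ :=
  if j % 2 = 1 then tauOW w else tauEW w

/-- The commutation class of reduced words corresponding, under Viennot's heap
bijection, to standard right-justified tableaux of shape `lam`: the `t p`-th letter
of `w` is the simple-transposition index `c - r + 1` of the cell `p = (r, c)`. -/
def rW (lam : List ℕ) : Set (List ℕ) :=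
  {w | w.length = lam.sum ∧
    ∃ t : Cell → ℕ, IsStandard (rjDiagram lam) lam.sum t ∧
      ∀ p ∈ rjDiagram lam, w.getD (t p - 1) 0 = p.2 - p.1 + 1}

/-! ### Auxiliary lemmas -/

private lemma getD_set_self' (l : List ℕ) (n x : ℕ) (h : n < l.length) :
    (l.set n x).getD n 0 = x := by
  simp [List.getD_eq_getElem?_getD, List.getElem?_set_self h]

private lemma getD_set_ne' (l : List ℕ) (n x m : ℕ) (h : m ≠ n) :
    (l.set n x).getD m 0 = l.getD m 0 := by
  simp [List.getD_eq_getElem?_getD, List.getElem?_set_ne (Ne.symm h)]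

private lemma tauW_length (j : ℕ) (w : List ℕ) : (tauW j w).length = w.length := by
  unfold tauW; split <;> simp

private lemma getD_tauW_ne (j m : ℕ) (w : List ℕ) (h1 : m ≠ j - 1) (h2 : m ≠ j) :
    (tauW j w).getD m 0 = w.getD m 0 := by
  unfold tauW
  split
  · rw [getD_set_ne' _ _ _ _ h2, getD_set_ne' _ _ _ _ h1]
  · rfl

private lemma foldl_tauW_length (L : List ℕ) (w : List ℕ) :
    (L.foldl (fun s i => tauW i s) w).length = w.length := by
  induction L generalizing w with
  | nil => rfl
  | cons j L ih => rw [List.foldl_cons, ih, tauW_length]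

private lemma foldl_tauW_untouched (L : List ℕ) (w : List ℕ) (m : ℕ)
    (h : ∀ j ∈ L, m ≠ j - 1 ∧ m ≠ j) :
    (L.foldl (fun s i => tauW i s) w).getD m 0 = w.getD m 0 := by
  induction L generalizing w with
  | nil => rfl
  | cons j L ih =>
      rw [List.foldl_cons, ih _ (fun x hx => h x (List.mem_cons_of_mem _ hx)),
        getD_tauW_ne j m w (h j List.mem_cons_self).1 (h j List.mem_cons_self).2]

private lemma getD_tauW_self (j : ℕ) (w s : List ℕ) (hl : s.length = w.length)
    (e1 : s.getD (j - 1) 0 = w.getD (j - 1) 0) (e2 : s.getD j 0 = w.getD j 0)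
    (hj : j < w.length) :
    (tauW j s).getD j 0 =
      if w.getD (j - 1) 0 + 2 ≤ w.getD j 0 ∨ w.getD j 0 + 2 ≤ w.getD (j - 1) 0
      then w.getD (j - 1) 0 else w.getD j 0 := by
  unfold tauW
  by_cases hc : w.getD (j - 1) 0 + 2 ≤ w.getD j 0 ∨ w.getD j 0 + 2 ≤ w.getD (j - 1) 0
  · rw [if_pos (⟨by omega, by rw [e1, e2]; exact hc⟩ :
      j < s.length ∧ (s.getD (j - 1) 0 + 2 ≤ s.getD j 0 ∨ s.getD j 0 + 2 ≤ s.getD (j - 1) 0)),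
      if_pos hc]
    rw [getD_set_self' _ j _ (by rw [List.length_set, hl]; exact hj)]
    exact e1
  · rw [if_neg, if_neg hc]
    · exact e2
    · rintro ⟨-, h2⟩
      rw [e1, e2] at h2
      exact hc h2

private lemma fold_getD (w : List ℕ) (par j : ℕ) (hj1 : 1 ≤ j) (hj2 : j ≤ w.length - 1)
    (hpar : j % 2 = par) :
    (((List.range' 1 (w.length - 1)).filter (fun i => i % 2 = par)).foldl
        (fun s i => tauW i s) w).getD j 0
    = if w.getD (j - 1) 0 + 2 ≤ w.getD j 0 ∨ w.getD j 0 + 2 ≤ w.getD (j - 1) 0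
      then w.getD (j - 1) 0 else w.getD j 0 := by
  have hjlt : j < w.length := by omega
  have hsort : ((List.range' 1 (w.length - 1)).filter (fun i => i % 2 = par)).Pairwise (· < ·) := by
    apply List.Pairwise.filter
    simpa using List.pairwise_lt_range' (s := 1) (n := w.length - 1)
  have hmemL : j ∈ (List.range' 1 (w.length - 1)).filter (fun i => i % 2 = par) := by
    rw [List.mem_filter]
    exact ⟨List.mem_range'_1.mpr ⟨hj1, by omega⟩, by simpa using hpar⟩
  obtain ⟨L1, L2, hsplit⟩ := List.append_of_mem hmemL
  have hmemprop : ∀ x, x ∈ (List.range' 1 (w.length - 1)).filter (fun i => i % 2 = par) →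
      1 ≤ x ∧ x % 2 = par := by
    intro x hx
    rw [List.mem_filter] at hx
    exact ⟨(List.mem_range'_1.mp hx.1).1, by simpa using hx.2⟩
  rw [hsplit] at hsort
  have hL1 : ∀ x ∈ L1, 1 ≤ x ∧ x % 2 = par ∧ x < j := by
    intro x hx
    have hxL := hmemprop x (by rw [hsplit]; exact List.mem_append_left _ hx)
    exact ⟨hxL.1, hxL.2,
      (List.pairwise_append.mp hsort).2.2 x hx j List.mem_cons_self⟩
  have hL2 : ∀ x ∈ L2, x % 2 = par ∧ j < x := by
    intro x hx
    have hxL := hmemprop x (by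
      rw [hsplit]; exact List.mem_append_right _ (List.mem_cons_of_mem _ hx))
    refine ⟨hxL.2, ?_⟩
    have := hsort.sublist (List.sublist_append_right L1 (j :: L2))
    exact (List.pairwise_cons.mp this).1 x hx
  rw [hsplit, List.foldl_append, List.foldl_cons]
  have hlen1 : (L1.foldl (fun s i => tauW i s) w).length = w.length := foldl_tauW_length _ _
  have e1 : (L1.foldl (fun s i => tauW i s) w).getD (j - 1) 0 = w.getD (j - 1) 0 :=
    foldl_tauW_untouched _ _ _ (fun x hx => by have := hL1 x hx; omega)
  have e2 : (L1.foldl (fun s i => tauW i s) w).getD j 0 = w.getD j 0 :=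
    foldl_tauW_untouched _ _ _ (fun x hx => by have := hL1 x hx; omega)
  rw [foldl_tauW_untouched L2 _ j (fun x hx => by have := hL2 x hx; omega)]
  exact getD_tauW_self j w _ hlen1 e1 e2 hjlt
private lemma mem_rjD {lam : List ℕ} {r c : ℕ} :
    (r, c) ∈ rjDiagram lam ↔
      (r < lam.length ∧ lam.headI - lam.getD r 0 ≤ c ∧ c < lam.headI) := Iff.rfl

private lemma lam_getD_anti (lam : List ℕ) (hs : lam.Pairwise (· ≥ ·)) {r r' : ℕ}
    (h : r ≤ r') (h2 : r' < lam.length) : lam.getD r' 0 ≤ lam.getD r 0 := by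
  have hrl : r < lam.length := lt_of_le_of_lt (by omega) h2
  rw [List.getD_eq_getElem lam 0 h2, List.getD_eq_getElem lam 0 hrl]
  rcases eq_or_lt_of_le h with rfl | hlt
  · exact le_refl _
  · exact List.Pairwise.rel_get_of_lt hs (by simpa)

private lemma corner_mem (lam : List ℕ) (hs : lam.Pairwise (· ≥ ·)) {r c r' c' : ℕ}
    (hp : (r, c) ∈ rjDiagram lam) (hq : (r', c') ∈ rjDiagram lam) (h : r ≤ r') :
    (r, c') ∈ rjDiagram lam := by
  obtain ⟨a1, a2, a3⟩ := mem_rjD.mp hp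
  obtain ⟨b1, b2, b3⟩ := mem_rjD.mp hq
  have := lam_getD_anti lam hs h b1
  exact mem_rjD.mpr ⟨a1, by omega, b3⟩

private lemma right_mem (lam : List ℕ) {r c r' : ℕ} (hp : (r, c) ∈ rjDiagram lam)
    (hq : (r', c + 1) ∈ rjDiagram lam) : (r, c + 1) ∈ rjDiagram lam := by
  obtain ⟨a1, a2, a3⟩ := mem_rjD.mp hp
  obtain ⟨b1, b2, b3⟩ := mem_rjD.mp hq
  exact mem_rjD.mpr ⟨a1, by omega, b3⟩

private lemma row_chain (lam : List ℕ) (t : Cell → ℕ)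
    (hrow : ∀ r c : ℕ, (r, c) ∈ rjDiagram lam → (r, c + 1) ∈ rjDiagram lam →
      t (r, c) < t (r, c + 1)) :
    ∀ k r c : ℕ, (r, c) ∈ rjDiagram lam → (r, c + k) ∈ rjDiagram lam →
      t (r, c) + k ≤ t (r, c + k) := by
  intro k
  induction k with
  | zero => intro r c hp _; simp
  | succ k ih =>
      intro r c hp hq
      have e : c + (k + 1) = c + k + 1 := by omega
      rw [e] at hq ⊢
      obtain ⟨a1, a2, a3⟩ := mem_rjD.mp hp
      obtain ⟨b1, b2, b3⟩ := mem_rjD.mp hq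
      have hmid : (r, c + k) ∈ rjDiagram lam := mem_rjD.mpr ⟨a1, by omega, by omega⟩
      have h1 := ih r c hp hmid
      have h2 := hrow r (c + k) hmid hq
      omega

private lemma col_chain (lam : List ℕ) (hs : lam.Pairwise (· ≥ ·)) (t : Cell → ℕ)
    (hcol : ∀ r c : ℕ, (r, c) ∈ rjDiagram lam → (r + 1, c) ∈ rjDiagram lam →
      t (r, c) < t (r + 1, c)) :
    ∀ k r c : ℕ, (r, c) ∈ rjDiagram lam → (r + k, c) ∈ rjDiagram lam →
      t (r, c) + k ≤ t (r + k, c) := by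
  intro k
  induction k with
  | zero => intro r c hp _; simp
  | succ k ih =>
      intro r c hp hq
      have e : r + (k + 1) = r + k + 1 := by omega
      rw [e] at hq ⊢
      obtain ⟨a1, a2, a3⟩ := mem_rjD.mp hp
      obtain ⟨b1, b2, b3⟩ := mem_rjD.mp hq
      have hanti := lam_getD_anti lam hs (show r + k ≤ r + k + 1 by omega) b1
      have hmid : (r + k, c) ∈ rjDiagram lam := mem_rjD.mpr ⟨by omega, by omega, b3⟩
      have h1 := ih r c hp hmid
      have h2 := hcol (r + k) c hmid hq
      omega

private lemma path_mono (lam : List ℕ) (hs : lam.Pairwise (· ≥ ·)) (t : Cell → ℕ)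
    (hrow : ∀ r c : ℕ, (r, c) ∈ rjDiagram lam → (r, c + 1) ∈ rjDiagram lam →
      t (r, c) < t (r, c + 1))
    (hcol : ∀ r c : ℕ, (r, c) ∈ rjDiagram lam → (r + 1, c) ∈ rjDiagram lam →
      t (r, c) < t (r + 1, c))
    (r c r' c' : ℕ) (hp : (r, c) ∈ rjDiagram lam) (hq : (r', c') ∈ rjDiagram lam)
    (h1 : r ≤ r') (h2 : c ≤ c') : t (r, c) + (r' - r) + (c' - c) ≤ t (r', c') := by
  have hcorn := corner_mem lam hs hp hq h1
  have e1 := row_chain lam t hrow (c' - c) r c hp (by rw [Nat.add_sub_cancel' h2]; exact hcorn)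
  rw [Nat.add_sub_cancel' h2] at e1
  have e2 := col_chain lam hs t hcol (r' - r) r c' hcorn
    (by rw [Nat.add_sub_cancel' h1]; exact hq)
  rw [Nat.add_sub_cancel' h1] at e2
  omega

private lemma not_nw (lam : List ℕ) (hs : lam.Pairwise (· ≥ ·)) (t : Cell → ℕ)
    (hrow : ∀ r c : ℕ, (r, c) ∈ rjDiagram lam → (r, c + 1) ∈ rjDiagram lam →
      t (r, c) < t (r, c + 1))
    (hcol : ∀ r c : ℕ, (r, c) ∈ rjDiagram lam → (r + 1, c) ∈ rjDiagram lam →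
      t (r, c) < t (r + 1, c))
    (r c r' c' : ℕ) (hp : (r, c) ∈ rjDiagram lam) (hq : (r', c') ∈ rjDiagram lam)
    (hlt : t (r, c) < t (r', c')) : ¬(r' ≤ r ∧ c' ≤ c) := by
  rintro ⟨ha, hb⟩
  have := path_mono lam hs t hrow hcol r' c' r c hq hp ha hb
  omega

private lemma classify (lam : List ℕ) (hs : lam.Pairwise (· ≥ ·)) (t : Cell → ℕ)
    (hrow : ∀ r c : ℕ, (r, c) ∈ rjDiagram lam → (r, c + 1) ∈ rjDiagram lam →
      t (r, c) < t (r, c + 1))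
    (hcol : ∀ r c : ℕ, (r, c) ∈ rjDiagram lam → (r + 1, c) ∈ rjDiagram lam →
      t (r, c) < t (r + 1, c))
    (r c r' c' : ℕ) (hp : (r, c) ∈ rjDiagram lam) (hq : (r', c') ∈ rjDiagram lam)
    (ht : t (r', c') = t (r, c) + 1) :
    (r' = r ∧ c' = c + 1) ∨ (r' = r + 1 ∧ c' = c) ∨ (r' < r ∧ c < c') ∨ (r < r' ∧ c' < c) := by
  by_cases hA : r' ≤ r <;> by_cases hB : c' ≤ c
  · exact absurd ⟨hA, hB⟩ (not_nw lam hs t hrow hcol r c r' c' hp hq (by omega))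
  · rcases eq_or_lt_of_le hA with he | hlt
    · have := path_mono lam hs t hrow hcol r c r' c' hp hq (by omega) (by omega)
      left; omega
    · right; right; left; omega
  · rcases eq_or_lt_of_le hB with he | hlt
    · have := path_mono lam hs t hrow hcol r c r' c' hp hq (by omega) (by omega)
      right; left; omega
    · right; right; right; omega
  · exfalso
    have := path_mono lam hs t hrow hcol r c r' c' hp hq (by omega) (by omega)
    omega

private lemma eq_diag (lam : List ℕ) (hs : lam.Pairwise (· ≥ ·)) (t : Cell → ℕ)
    (hrow : ∀ r c : ℕ, (r, c) ∈ rjDiagram lam → (r, c + 1) ∈ rjDiagram lam →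
      t (r, c) < t (r, c + 1))
    (hcol : ∀ r c : ℕ, (r, c) ∈ rjDiagram lam → (r + 1, c) ∈ rjDiagram lam →
      t (r, c) < t (r + 1, c))
    (hinj : Set.InjOn t (rjDiagram lam))
    (r c r' c' rm cm : ℕ) (hp : (r, c) ∈ rjDiagram lam) (hq : (r', c') ∈ rjDiagram lam)
    (hm : (rm, cm) ∈ rjDiagram lam) (ht : t (r', c') = t (r, c) + 2)
    (htm : t (rm, cm) = t (r, c) + 1) (hdiag : c' + r = c + r') :
    rm = r ∧ cm = c + 1 := by
  have hNW := not_nw lam hs t hrow hcol r c r' c' hp hq (by omega)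
  have hr : r < r' := by
    by_contra hcon
    exact hNW ⟨by omega, by omega⟩
  have hpm := path_mono lam hs t hrow hcol r c r' c' hp hq (by omega) (by omega)
  have hr' : r' = r + 1 := by omega
  have hc' : c' = c + 1 := by omega
  rw [hr', hc'] at hq ht
  have hcorn : (r, c + 1) ∈ rjDiagram lam := right_mem lam hp hq
  have g1 := hrow r c hp hcorn
  have g2 := hcol r (c + 1) hcorn hq
  have htc : t (r, c + 1) = t (rm, cm) := by omega
  have heq := hinj hcorn hm htc
  rw [Prod.mk.injEq] at heq
  exact ⟨heq.1.symm, heq.2.symm⟩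

set_option maxHeartbeats 1000000

private lemma core_case (lam : List ℕ) (hsort : lam.Pairwise (· ≥ ·)) (t : Cell → ℕ)
    (hrow : ∀ r c : ℕ, (r, c) ∈ rjDiagram lam → (r, c + 1) ∈ rjDiagram lam →
      t (r, c) < t (r, c + 1))
    (hcol : ∀ r c : ℕ, (r, c) ∈ rjDiagram lam → (r + 1, c) ∈ rjDiagram lam →
      t (r, c) < t (r + 1, c))
    (hinj : Set.InjOn t (rjDiagram lam))
    (i r1 c1 r2 c2 r3 c3 r4 c4 : ℕ)
    (hm1 : (r1, c1) ∈ rjDiagram lam) (hm2 : (r2, c2) ∈ rjDiagram lam)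
    (hm3 : (r3, c3) ∈ rjDiagram lam) (hm4 : (r4, c4) ∈ rjDiagram lam)
    (hh1 : r1 ≤ c1) (hh2 : r2 ≤ c2) (hh3 : r3 ≤ c3) (hh4 : r4 ≤ c4)
    (ht1 : t (r1, c1) = i - 1) (ht2 : t (r2, c2) = i)
    (ht3 : t (r3, c3) = i + 1) (ht4 : t (r4, c4) = i + 2) (h1 : 1 < i) :
    (c1 - r1 + 1 < c3 - r3 + 1 ↔
      (if c1 - r1 + 1 + 2 ≤ c2 - r2 + 1 ∨ c2 - r2 + 1 + 2 ≤ c1 - r1 + 1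
        then c1 - r1 + 1 else c2 - r2 + 1) ≤
      (if c3 - r3 + 1 + 2 ≤ c4 - r4 + 1 ∨ c4 - r4 + 1 + 2 ≤ c3 - r3 + 1
        then c3 - r3 + 1 else c4 - r4 + 1)) := by
  have K12 := classify lam hsort t hrow hcol r1 c1 r2 c2 hm1 hm2 (by rw [ht1, ht2]; omega)
  have K23 := classify lam hsort t hrow hcol r2 c2 r3 c3 hm2 hm3 (by rw [ht2, ht3])
  have K34 := classify lam hsort t hrow hcol r3 c3 r4 c4 hm3 hm4 (by rw [ht3, ht4])
  have hEQ13 : c3 + r1 = c1 + r3 → r2 = r1 ∧ c2 = c1 + 1 := fun h =>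
    eq_diag lam hsort t hrow hcol hinj r1 c1 r3 c3 r2 c2 hm1 hm3 hm2
      (by rw [ht1, ht3]; omega) (by rw [ht1, ht2]; omega) h
  have hEQ24 : c4 + r2 = c2 + r4 → r3 = r2 ∧ c3 = c2 + 1 := fun h =>
    eq_diag lam hsort t hrow hcol hinj r2 c2 r4 c4 r3 c3 hm2 hm4 hm3
      (by rw [ht2, ht4]) (by rw [ht2, ht3]) h
  have hbc : ¬(c2 - r2 + 1 = c3 - r3 + 1) := by
    rcases K23 with ⟨hA, hB⟩ | ⟨hA, hB⟩ | ⟨hA, hB⟩ | ⟨hA, hB⟩ <;> omega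
  split_ifs with hcm1 hcm2 hcm2
  · -- both commute
    by_cases hac : c3 + r1 = c1 + r3
    · obtain ⟨hA, hB⟩ := hEQ13 hac
      omega
    · omega
  · -- first commutes, second adjacent
    rcases K34 with ⟨hr4, hc4⟩ | ⟨hr4, hc4⟩ | ⟨hr4, hc4⟩ | ⟨hr4, hc4⟩
    · -- d = c + 1 : exclude a = c and a = c + 1
      by_cases hac : c3 + r1 = c1 + r3
      · obtain ⟨hA, hB⟩ := hEQ13 hac
        omega
      · by_cases hac1 : c1 + r3 = c3 + r1 + 1
        · exfalso
          have hNW := not_nw lam hsort t hrow hcol r1 c1 r3 c3 hm1 hm3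
            (by rw [ht1, ht3]; omega)
          have hr13 : r1 < r3 := by
            by_contra hcon
            exact hNW ⟨by omega, by omega⟩
          have hpm := path_mono lam hsort t hrow hcol r1 c1 r3 c3 hm1 hm3
            (by omega) (by omega)
          rw [ht1, ht3] at hpm
          have hr3' : r3 = r1 + 1 := by omega
          have hc3' : c3 = c1 := by omega
          rw [show r4 = r1 + 1 by omega, show c4 = c1 + 1 by omega] at hm4 ht4
          have hq := right_mem lam hm1 hm4
          have g1 := hrow r1 c1 hm1 hq
          have g2 := hcol r1 (c1 + 1) hq hm4
          rw [ht1] at g1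
          rw [ht4] at g2
          by_cases hq1 : t (r1, c1 + 1) = i
          · have heq := hinj hq hm2 (by rw [hq1, ht2])
            rw [Prod.mk.injEq] at heq
            omega
          · have htq : t (r1, c1 + 1) = i + 1 := by omega
            have heq := hinj hq hm3 (by rw [htq, ht3])
            rw [Prod.mk.injEq] at heq
            omega
        · omega
    · omega
    · omega
    · omega
  · -- first adjacent, second commutes
    rcases K12 with ⟨hr2, hc2⟩ | ⟨hr2, hc2⟩ | ⟨hr2, hc2⟩ | ⟨hr2, hc2⟩
    · omega
    · by_cases hac : c3 + r1 = c1 + r3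
      · obtain ⟨hA, hB⟩ := hEQ13 hac
        omega
      · omega
    · omega
    · omega
  · -- both adjacent
    rcases K12 with ⟨hr2, hc2⟩ | ⟨hr2, hc2⟩ | ⟨hr2, hc2⟩ | ⟨hr2, hc2⟩ <;>
      rcases K34 with ⟨hr4, hc4⟩ | ⟨hr4, hc4⟩ | ⟨hr4, hc4⟩ | ⟨hr4, hc4⟩
    · omega
    · omega
    · omega
    · omega
    · -- (dn, rt)
      by_cases hac : c3 + r1 = c1 + r3
      · obtain ⟨hA, hB⟩ := hEQ13 hac
        omega
      · by_cases hbd : c4 + r2 = c2 + r4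
        · obtain ⟨hA, hB⟩ := hEQ24 hbd
          omega
        · omega
    · -- (dn, dn)
      by_cases hac : c3 + r1 = c1 + r3
      · obtain ⟨hA, hB⟩ := hEQ13 hac
        omega
      · omega
    · omega
    · omega
    all_goals omega

/-- Let `w` be a reduced word in the commutation class corresponding to a
right-justified shape `lam` (with `N = |lam|` letters), let `1 < i < N - 1`, and
let `w' = w.τ_{o(i+1)}`. Then `w_{i-1} < w_{i+1}` if and only if `w'ᵢ ≤ w'_{i+2}`
(letters indexed starting at `1`). -/

theorem comparison_lemma (lam : List ℕ) (hpart : IsPartition lam)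
    (hheap : ∀ p ∈ rjDiagram lam, p.1 ≤ p.2)
    (w : List ℕ) (hw : w ∈ rW lam) (i : ℕ) (h1 : 1 < i) (h2 : i < lam.sum - 1) :
    (w.getD (i - 2) 0 < w.getD i 0 ↔
      (tauOrdW (i + 1) w).getD (i - 1) 0 ≤ (tauOrdW (i + 1) w).getD (i + 1) 0) := by
  obtain ⟨hlen, t, ⟨hbij, hrow, hcol, -⟩, hlet⟩ := hw
  obtain ⟨hsort, -⟩ := hpart
  have hinj := hbij.injOn
  have hN : i + 2 ≤ lam.sum := by omega
  have hred : ∀ j, 1 ≤ j → j + 1 ≤ w.length → j % 2 = (i + 1) % 2 →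
      (tauOrdW (i + 1) w).getD j 0 =
        if w.getD (j - 1) 0 + 2 ≤ w.getD j 0 ∨ w.getD j 0 + 2 ≤ w.getD (j - 1) 0
        then w.getD (j - 1) 0 else w.getD j 0 := by
    intro j hj1 hj2 hjp
    unfold tauOrdW tauOW tauEW
    by_cases hp : (i + 1) % 2 = 1
    · rw [if_pos hp]
      exact fold_getD w 1 j hj1 (by omega) (by omega)
    · rw [if_neg hp]
      exact fold_getD w 0 j hj1 (by omega) (by omega)
  rw [hred (i - 1) (by omega) (by omega) (by omega),
    hred (i + 1) (by omega) (by omega) (by omega)]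
  have e1 : i - 1 - 1 = i - 2 := by omega
  have e2 : i + 1 - 1 = i := by omega
  rw [e1, e2]
  have hcell : ∀ k, 1 ≤ k → k ≤ lam.sum → ∃ p, p ∈ rjDiagram lam ∧ t p = k := by
    intro k hk1 hk2
    obtain ⟨p, hp, hpt⟩ := hbij.surjOn (Set.mem_Icc.mpr ⟨hk1, hk2⟩)
    exact ⟨p, hp, hpt⟩
  obtain ⟨⟨r1, c1⟩, hm1, ht1⟩ := hcell (i - 1) (by omega) (by omega)
  obtain ⟨⟨r2, c2⟩, hm2, ht2⟩ := hcell i (by omega) (by omega)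
  obtain ⟨⟨r3, c3⟩, hm3, ht3⟩ := hcell (i + 1) (by omega) (by omega)
  obtain ⟨⟨r4, c4⟩, hm4, ht4⟩ := hcell (i + 2) (by omega) (by omega)
  have hh1 : r1 ≤ c1 := hheap _ hm1
  have hh2 : r2 ≤ c2 := hheap _ hm2
  have hh3 : r3 ≤ c3 := hheap _ hm3
  have hh4 : r4 ≤ c4 := hheap _ hm4
  have ha : w.getD (i - 2) 0 = c1 - r1 + 1 := by
    have h := hlet _ hm1
    rw [ht1, e1] at h
    exact h
  have hb : w.getD (i - 1) 0 = c2 - r2 + 1 := by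
    have h := hlet _ hm2
    rwa [ht2] at h
  have hcc : w.getD i 0 = c3 - r3 + 1 := by
    have h := hlet _ hm3
    rwa [ht3, e2] at h
  have hd : w.getD (i + 1) 0 = c4 - r4 + 1 := by
    have h := hlet _ hm4
    rw [ht4] at h
    have e3 : i + 2 - 1 = i + 1 := by omega
    rwa [e3] at h
  rw [ha, hb, hcc, hd]
  exact core_case lam hsort t hrow hcol hinj i r1 c1 r2 c2 r3 c3 r4 c4
    hm1 hm2 hm3 hm4 hh1 hh2 hh3 hh4 ht1 ht2 ht3 ht4 h1
end
end
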